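/- arXiv:1405.7129 — 3 statements merged into one kernel-verified Lean document; each statement's English description precedes it below -/
import Mathlib

section
/- Let G be a chain graph on node set V, let C ⊆ V, and let i, j be nodes. Then there is a c-connecting walk between i and j given C if and only if there is a walk between i and j all of whose sections are paths, on which every node of every collider section lies in C ∪ ant(C) and no node of any non-collider section lies in C. Moreover, the two walks can be chosen to be endpoint-identical. -/
/-!
Common definitions: mixed graphs, walks, sections, colliders, c-separation, and the
marginalization / conditioning / anterial-graph algorithms of Sadeghi,
"Marginalization and conditioning for LWF chain graphs".
-/

namespace LWF

variable {V : Type*} {W : Type*}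

/-- A mixed graph: a node set together with three edge relations
(lines `i — j`, arrows `i → j`, arcs `i ↔ j`). -/
structure MixedGraph (V : Type*) where
  nodes : Set V
  line : V → V → Prop
  arrow : V → V → Prop
  arc : V → V → Prop

namespace MixedGraph

/-- The structural axioms of a (loopless) mixed graph: lines and arcs are symmetric,
all three relations are irreflexive, and edges join nodes of the graph. -/
def IsMixedGraph (G : MixedGraph V) : Prop :=
  (∀ i j, G.line i j → G.line j i) ∧ (∀ i, ¬ G.line i i) ∧
  (∀ i, ¬ G.arrow i i) ∧
  (∀ i j, G.arc i j → G.arc j i) ∧ (∀ i, ¬ G.arc i i) ∧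
  (∀ i j, G.line i j → i ∈ G.nodes ∧ j ∈ G.nodes) ∧
  (∀ i j, G.arrow i j → i ∈ G.nodes ∧ j ∈ G.nodes) ∧
  (∀ i j, G.arc i j → i ∈ G.nodes ∧ j ∈ G.nodes)

/-- `i` and `j` are adjacent: some edge joins them. -/
def adj (G : MixedGraph V) (i j : V) : Prop :=
  G.line i j ∨ G.arrow i j ∨ G.arrow j i ∨ G.arc i j

/-- A single step of a semi-directed walk: a line, or an arrow pointing forwards. -/
def sdStep (G : MixedGraph V) (i j : V) : Prop := G.line i j ∨ G.arrow i j

/-- `i` is an anterior of `j`: there is a (nontrivial) semi-directed walk from `i` to `j`;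
by convention a node is not an anterior of itself. -/
def anterior (G : MixedGraph V) (i j : V) : Prop :=
  i ≠ j ∧ Relation.TransGen G.sdStep i j

/-- The set of anteriors of a node. -/
def ant (G : MixedGraph V) (j : V) : Set V := {i | G.anterior i j}

/-- `ant(C) = (⋃ c ∈ C, ant(c)) \ C` -/
def antSet (G : MixedGraph V) (C : Set V) : Set V := (⋃ c ∈ C, G.ant c) \ C

/-- No semi-directed cycle containing at least one arrow: equivalently, there is no
arrow `a → b` together with a semi-directed walk from `b` back to `a`. -/
def NoArrowSemiDirectedCycle (G : MixedGraph V) : Prop :=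
  ∀ a b, G.arrow a b → ¬ Relation.ReflTransGen G.sdStep b a

/-- chain mixed graph -/
def IsCMG (G : MixedGraph V) : Prop := G.IsMixedGraph ∧ G.NoArrowSemiDirectedCycle

/-- chain graph: a CMG without arcs -/
def IsCG (G : MixedGraph V) : Prop := G.IsCMG ∧ ∀ i j, ¬ G.arc i j

/-- anterial graph: a CMG in which no arc has an endpoint that is an anterior of the
other endpoint -/
def IsAnG (G : MixedGraph V) : Prop :=
  G.IsCMG ∧ ∀ i j, G.arc i j → ¬ G.anterior i j

/-- `p` is a path consisting only of lines, from `a` to `b` (possibly a single node). -/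
def lineSection (G : MixedGraph V) (p : List V) (a b : V) : Prop :=
  p ≠ [] ∧ p.Chain' G.line ∧ p.Nodup ∧ p.head? = some a ∧ p.getLast? = some b

end MixedGraph

/-- The kind of a non-line connecting edge on a walk. -/
inductive Conn : Type
  | fwd   -- an arrow pointing forwards along the walk
  | bwd   -- an arrow pointing backwards along the walk
  | biarc -- an arc

/-- The connecting edge has an arrowhead pointing at the following section. -/
def Conn.headTowardsNext : Conn → Prop
  | .fwd => True
  | .bwd => False
  | .biarc => True

/-- The connecting edge has an arrowhead pointing at the preceding section. -/
def Conn.headTowardsPrev : Conn → Prop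
  | .fwd => False
  | .bwd => True
  | .biarc => True

/-- The connecting edge of kind `c` from `a` to `b` is present in `G`. -/
def MixedGraph.connOK (G : MixedGraph V) : Conn → V → V → Prop
  | .fwd, a, b => G.arrow a b
  | .bwd, a, b => G.arrow b a
  | .biarc, a, b => G.arc a b

/-- A walk in a mixed graph, presented by its (unique) decomposition into sections:
a first section followed by a list of non-line connecting edges, each with the next
section. Each section is a nonempty list of nodes joined by lines. -/
structure MWalk (V : Type*) where
  first : List V
  rest : List (Conn × List V)

namespace MWalk

/-- The list of sections of a walk. -/
def sections (w : MWalk V) : List (List V) := w.first :: w.rest.map Prod.snd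

/-- The list of connecting (non-line) edges of a walk. -/
def conns (w : MWalk V) : List Conn := w.rest.map Prod.fst

/-- The list of all nodes of a walk, in order. -/
def nodes (w : MWalk V) : List V := w.sections.flatten

/-- The inner nodes of a walk: all nodes except the two endpoints. -/
def innerNodes (w : MWalk V) : List V := (w.nodes.drop 1).dropLast

/-- The section with index `k` is a collider section of the walk: it is an inner
section and the connecting edges on both sides have an arrowhead pointing at it. -/
def colliderAt (w : MWalk V) (k : ℕ) : Prop :=
  0 < k ∧ k < w.conns.length ∧
  (∃ c, w.conns[k-1]? = some c ∧ c.headTowardsNext) ∧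
  (∃ c, w.conns[k]? = some c ∧ c.headTowardsPrev)

/-- There is an arrowhead pointing at the endpoint section containing the first node. -/
def headAtStart (w : MWalk V) : Prop :=
  ∃ c, w.conns[0]? = some c ∧ c.headTowardsPrev

/-- There is an arrowhead pointing at the endpoint section containing the last node. -/
def headAtEnd (w : MWalk V) : Prop :=
  ∃ c, w.conns[w.conns.length - 1]? = some c ∧ c.headTowardsNext

/-- The walk is `c`-connecting given `C`: every collider section contains a node of `C`
and no non-collider section contains a node of `C`. -/
def cConnecting (w : MWalk V) (C : Set V) : Prop :=
  (∀ k s, w.sections[k]? = some s → w.colliderAt k → ∃ x ∈ s, x ∈ C) ∧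
  (∀ k s, w.sections[k]? = some s → ¬ w.colliderAt k → ∀ x ∈ s, x ∉ C)

end MWalk

/-- Two walks between the same endpoints are endpoint-identical: one has an arrowhead
pointing at its endpoint section containing the first (resp. last) endpoint exactly when
the other does. -/
def EndpointIdentical (w₁ w₂ : MWalk V) : Prop :=
  (w₁.headAtStart ↔ w₂.headAtStart) ∧ (w₁.headAtEnd ↔ w₂.headAtEnd)

/-- Auxiliary: the tail of a walk is realized in `G`, starting at node `a`
and ending at node `j`. -/
def walkAux (G : MixedGraph V) : V → List (Conn × List V) → V → Prop
  | a, [], j => a = j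
  | a, (c, s) :: rest, j =>
      s ≠ [] ∧ s.Chain' G.line ∧
      (∃ b, s.head? = some b ∧ G.connOK c a b) ∧
      (∃ e, s.getLast? = some e ∧ walkAux G e rest j)

/-- `w` is a walk in `G` between `i` and `j` (read from `i` to `j`). -/
def MWalk.IsWalkFrom (w : MWalk V) (G : MixedGraph V) (i j : V) : Prop :=
  w.first ≠ [] ∧ w.first.Chain' G.line ∧ w.first.head? = some i ∧
  ∃ e, w.first.getLast? = some e ∧ walkAux G e w.rest j

namespace MixedGraph

/-- There is a `c`-connecting walk between `i` and `j` given `C` in `G`. -/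
def cConnect (G : MixedGraph V) (i j : V) (C : Set V) : Prop :=
  ∃ w : MWalk V, w.IsWalkFrom G i j ∧ w.cConnecting C

/-- `A ⊥_c B | C` in `G`. -/
def cSep (G : MixedGraph V) (A B C : Set V) : Prop :=
  ∀ i ∈ A, ∀ j ∈ B, ¬ G.cConnect i j C

/-- `edgeB G i j hi hj`: there is an edge between `i` and `j` in `G` with an arrowhead
at `i` iff `hi = true`, and an arrowhead at `j` iff `hj = true`. -/
def edgeB (G : MixedGraph V) (i j : V) : Bool → Bool → Prop
  | false, false => G.line i j
  | false, true => G.arrow i j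
  | true, false => G.arrow j i
  | true, true => G.arc i j

/-- A graph is maximal if every pair of distinct non-adjacent nodes is c-separated by
some node set. -/
def MaximalCMG (G : MixedGraph V) : Prop :=
  ∀ i ∈ G.nodes, ∀ j ∈ G.nodes, i ≠ j → ¬ G.adj i j →
    ∃ C : Set V, C ⊆ G.nodes ∧ i ∉ C ∧ j ∉ C ∧ ¬ G.cConnect i j C

/-- Delete the nodes in `M` together with all edges incident to them. -/
def deleteNodes (G : MixedGraph V) (M : Set V) : MixedGraph V where
  nodes := G.nodes \ M
  line i j := G.line i j ∧ i ∉ M ∧ j ∉ M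
  arrow i j := G.arrow i j ∧ i ∉ M ∧ j ∉ M
  arc i j := G.arc i j ∧ i ∉ M ∧ j ∉ M

/-! ### the marginalization algorithm -/

/-- Case 9 of step 1 of the marginalization algorithm: a collider trislide
`m → i — ⋯ — t ↔ j` with `m ∈ M` generates the arc `i ↔ j`. -/
def margGen9 (G : MixedGraph V) (M : Set V) (i j : V) : Prop :=
  ∃ m ∈ M, ∃ p t, G.arrow m i ∧ G.lineSection p i t ∧ G.arc t j ∧
    j ∉ p ∧ m ∉ p ∧ j ≠ m

/-- Step 1 of the marginalization algorithm: for every collider trislide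
`m → i — ⋯ — t ← j` (resp. `m → i — ⋯ — t ↔ j`) with endpoint `m ∈ M`, add the arrow
`j → i` (resp. the arc `i ↔ j`). -/
def margStep1 (G : MixedGraph V) (M : Set V) : MixedGraph V where
  nodes := G.nodes
  line := G.line
  arrow a b := G.arrow a b ∨
    ∃ m ∈ M, ∃ p t, G.arrow m b ∧ G.lineSection p b t ∧ G.arrow a t ∧
      a ∉ p ∧ m ∉ p ∧ a ≠ m
  arc a b := G.arc a b ∨ G.margGen9 M a b ∨ G.margGen9 M b a

end MixedGraph

/-- The kind of an edge. -/
inductive EKind : Type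
  | ln  -- a line
  | ar  -- an arrow
  | bi  -- an arc

/-- Step 2 of the marginalization algorithm, as a closure: starting from the edges of
`H`, repeatedly add, for every tripath with inner node `m ∈ M`, the edge given in
Table 1 (cases 1-7), until no new edge can be added. `MargCl H M EKind.ar a b` means:
an arrow from `a` to `b`. -/
inductive MargCl (H : MixedGraph V) (M : Set V) : EKind → V → V → Prop
  | base_ln {i j : V} : H.line i j → MargCl H M EKind.ln i j
  | base_ar {i j : V} : H.arrow i j → MargCl H M EKind.ar i j
  | base_bi {i j : V} : H.arc i j → MargCl H M EKind.bi i j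
  | symm_ln {i j : V} : MargCl H M EKind.ln i j → MargCl H M EKind.ln j i
  | symm_bi {i j : V} : MargCl H M EKind.bi i j → MargCl H M EKind.bi j i
  /-- `i ← m ← j` generates the arrow `j → i` -/
  | r1 {i j m : V} : m ∈ M → i ≠ j → MargCl H M EKind.ar j m →
      MargCl H M EKind.ar m i → MargCl H M EKind.ar j i
  /-- `i ← m — j` generates the arrow `j → i` -/
  | r2 {i j m : V} : m ∈ M → i ≠ j → MargCl H M EKind.ln m j →
      MargCl H M EKind.ar m i → MargCl H M EKind.ar j i
  /-- `i ↔ m — j` generates the arc `i ↔ j` -/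
  | r3 {i j m : V} : m ∈ M → i ≠ j → MargCl H M EKind.bi i m →
      MargCl H M EKind.ln m j → MargCl H M EKind.bi i j
  /-- `i ← m → j` generates the arc `i ↔ j` -/
  | r4 {i j m : V} : m ∈ M → i ≠ j → MargCl H M EKind.ar m i →
      MargCl H M EKind.ar m j → MargCl H M EKind.bi i j
  /-- `i ← m ↔ j` generates the arc `i ↔ j` -/
  | r5 {i j m : V} : m ∈ M → i ≠ j → MargCl H M EKind.ar m i →
      MargCl H M EKind.bi m j → MargCl H M EKind.bi i j
  /-- `i — m ← j` generates the arrow `j → i` -/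
  | r6 {i j m : V} : m ∈ M → i ≠ j → MargCl H M EKind.ln i m →
      MargCl H M EKind.ar j m → MargCl H M EKind.ar j i
  /-- `i — m — j` generates the line `i — j` -/
  | r7 {i j m : V} : m ∈ M → i ≠ j → MargCl H M EKind.ln i m →
      MargCl H M EKind.ln m j → MargCl H M EKind.ln i j

namespace MixedGraph

/-- The graph obtained after steps 1 and 2 of the marginalization algorithm. -/
def margCore (G : MixedGraph V) (M : Set V) : MixedGraph V where
  nodes := G.nodes
  line := MargCl (G.margStep1 M) M EKind.ln
  arrow := MargCl (G.margStep1 M) M EKind.ar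
  arc := MargCl (G.margStep1 M) M EKind.bi

/-- The marginalization algorithm `α_CMG(G; M, ∅)`. -/
def alphaMarg (G : MixedGraph V) (M : Set V) : MixedGraph V :=
  (G.margCore M).deleteNodes M

/-! ### the conditioning algorithm -/

/-- Step 2, case 4, of the conditioning algorithm: a collider trislide
`s ↔ b — ⋯ — t ← a` with `s ∈ S` generates the arrow `a → b`. -/
def condGenArrow (G : MixedGraph V) (S : Set V) (a b : V) : Prop :=
  ∃ s ∈ S, ∃ p t, G.arc s b ∧ G.lineSection p b t ∧ G.arrow a t ∧
    a ∉ p ∧ s ∉ p ∧ a ≠ s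

/-- Step 2, case 5, of the conditioning algorithm: a collider trislide
`s ↔ i — ⋯ — t ↔ j` with `s ∈ S` generates the arc `i ↔ j`. -/
def condGenArc (G : MixedGraph V) (S : Set V) (i j : V) : Prop :=
  ∃ s ∈ S, ∃ p t, G.arc s i ∧ G.lineSection p i t ∧ G.arc t j ∧
    j ∉ p ∧ s ∉ p ∧ j ≠ s

/-- The graph obtained after step 2 of the conditioning algorithm. -/
def condStep2 (G : MixedGraph V) (S : Set V) : MixedGraph V where
  nodes := G.nodes
  line := G.line
  arrow a b := G.arrow a b ∨ G.condGenArrow S a b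
  arc a b := G.arc a b ∨ G.condGenArc S a b ∨ G.condGenArc S b a

end MixedGraph

/-- Step 3 of the conditioning algorithm, as a closure: starting from the edges of `H`,
repeatedly add, for every collider trislide whose inner section has all its nodes in
`S`, the indicated edge; lines generated in this step are not used to form new
sections (sections are formed from the lines of `H` only). -/
inductive CondCl (H : MixedGraph V) (S : Set V) : EKind → V → V → Prop
  | base_ln {i j : V} : H.line i j → CondCl H S EKind.ln i j
  | base_ar {i j : V} : H.arrow i j → CondCl H S EKind.ar i j
  | base_bi {i j : V} : H.arc i j → CondCl H S EKind.bi i j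
  | symm_ln {i j : V} : CondCl H S EKind.ln i j → CondCl H S EKind.ln j i
  | symm_bi {i j : V} : CondCl H S EKind.bi i j → CondCl H S EKind.bi j i
  /-- `i → s — ⋯ — s ← j` generates the line `i — j` -/
  | rLL {i j a b : V} {p : List V} :
      H.lineSection p a b → (∀ x ∈ p, x ∈ S) → i ≠ j → i ∉ p → j ∉ p →
      CondCl H S EKind.ar i a → CondCl H S EKind.ar j b → CondCl H S EKind.ln i j
  /-- `i ↔ s — ⋯ — s ← j` generates the arrow `j → i` -/
  | rBL {i j a b : V} {p : List V} :
      H.lineSection p a b → (∀ x ∈ p, x ∈ S) → i ≠ j → i ∉ p → j ∉ p →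
      CondCl H S EKind.bi i a → CondCl H S EKind.ar j b → CondCl H S EKind.ar j i
  /-- `i ↔ s — ⋯ — s ↔ j` generates the arc `i ↔ j` -/
  | rBB {i j a b : V} {p : List V} :
      H.lineSection p a b → (∀ x ∈ p, x ∈ S) → i ≠ j → i ∉ p → j ∉ p →
      CondCl H S EKind.bi i a → CondCl H S EKind.bi j b → CondCl H S EKind.bi i j

namespace MixedGraph

/-- Step 4 of the conditioning algorithm: remove all arrowheads pointing at members of
`S`; arrows pointing at `S` become lines, and arcs with an endpoint in `S` become
arrows pointing away from that endpoint (arcs with both endpoints in `S` become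
lines). -/
def removeHeads (G : MixedGraph V) (S : Set V) : MixedGraph V where
  nodes := G.nodes
  line a b := G.line a b ∨ (G.arrow a b ∧ b ∈ S) ∨ (G.arrow b a ∧ a ∈ S) ∨
    (G.arc a b ∧ a ∈ S ∧ b ∈ S)
  arrow a b := (G.arrow a b ∧ b ∉ S) ∨ (G.arc a b ∧ a ∈ S ∧ b ∉ S)
  arc a b := G.arc a b ∧ a ∉ S ∧ b ∉ S

/-- The graph obtained after steps 1–3 of the conditioning algorithm. -/
def condCore (G : MixedGraph V) (C : Set V) : MixedGraph V where
  nodes := G.nodes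
  line := CondCl (G.condStep2 (C ∪ G.antSet C)) (C ∪ G.antSet C) EKind.ln
  arrow := CondCl (G.condStep2 (C ∪ G.antSet C)) (C ∪ G.antSet C) EKind.ar
  arc := CondCl (G.condStep2 (C ∪ G.antSet C)) (C ∪ G.antSet C) EKind.bi

/-- The conditioning algorithm `α_CMG(G; ∅, C)`. -/
def alphaCond (G : MixedGraph V) (C : Set V) : MixedGraph V :=
  ((G.condCore C).removeHeads (C ∪ G.antSet C)).deleteNodes C

/-- Simultaneous marginalization and conditioning:
`α_CMG(G; M, C) = α_CMG(α_CMG(G; M, ∅); ∅, C)`. -/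
def alphaCMG (G : MixedGraph V) (M C : Set V) : MixedGraph V :=
  (G.alphaMarg M).alphaCond C

/-! ### anterial graphs -/

/-- Step 3 of the anterial-graph algorithm: a trislide `a → t — ⋯ — b ↔ k` with
`k ∈ ant(b)` generates the arrow `a → b`. -/
def angGen3Arrow (H : MixedGraph V) (a b : V) : Prop :=
  ∃ p t k, H.arrow a t ∧ H.lineSection p t b ∧ H.arc b k ∧ H.anterior k b ∧
    a ∉ p ∧ k ∉ p ∧ a ≠ k

/-- Step 3 of the anterial-graph algorithm: a trislide `a ↔ t — ⋯ — b ↔ k` with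
`k ∈ ant(b)` generates the arc `a ↔ b`. -/
def angGen3Arc (H : MixedGraph V) (a b : V) : Prop :=
  ∃ p t k, H.arc a t ∧ H.lineSection p t b ∧ H.arc b k ∧ H.anterior k b ∧
    a ∉ p ∧ k ∉ p ∧ a ≠ k

/-- The graph obtained after step 3 of the anterial-graph algorithm applied to `H`. -/
def angStep3 (H : MixedGraph V) : MixedGraph V where
  nodes := H.nodes
  line := H.line
  arrow a b := H.arrow a b ∨ H.angGen3Arrow a b
  arc a b := H.arc a b ∨ H.angGen3Arc a b ∨ H.angGen3Arc b a

end MixedGraph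

/-- Step 4 of the anterial-graph algorithm, as a closure: repeatedly add, for every
trislide `j → k₁ — ⋯ — k_m ↔ i` (resp. `j ↔ k₁ — ⋯ — k_m ↔ i`) with some `k_r ∈ ant(i)`,
the arrow `j → i` (resp. the arc `j ↔ i`). -/
inductive AnGCl (H : MixedGraph V) : EKind → V → V → Prop
  | base_ln {i j : V} : H.line i j → AnGCl H EKind.ln i j
  | base_ar {i j : V} : H.arrow i j → AnGCl H EKind.ar i j
  | base_bi {i j : V} : H.arc i j → AnGCl H EKind.bi i j
  | symm_bi {i j : V} : AnGCl H EKind.bi i j → AnGCl H EKind.bi j i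
  /-- `j → k₁ — ⋯ — k_m ↔ i` with some `k_r ∈ ant(i)` generates the arrow `j → i` -/
  | r_ar {i j a b : V} {p : List V} :
      H.lineSection p a b → (∃ r ∈ p, H.anterior r i) → j ∉ p → i ∉ p → j ≠ i →
      AnGCl H EKind.ar j a → AnGCl H EKind.bi b i → AnGCl H EKind.ar j i
  /-- `j ↔ k₁ — ⋯ — k_m ↔ i` with some `k_r ∈ ant(i)` generates the arc `j ↔ i` -/
  | r_bi {i j a b : V} {p : List V} :
      H.lineSection p a b → (∃ r ∈ p, H.anterior r i) → j ∉ p → i ∉ p → j ≠ i →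
      AnGCl H EKind.bi j a → AnGCl H EKind.bi b i → AnGCl H EKind.bi j i

namespace MixedGraph

/-- The graph obtained after step 4 of the anterial-graph algorithm applied to `H`. -/
def angStep4Graph (H : MixedGraph V) : MixedGraph V where
  nodes := H.nodes
  line := AnGCl H EKind.ln
  arrow := AnGCl H EKind.ar
  arc := AnGCl H EKind.bi

/-- Step 5 of the anterial-graph algorithm: replace every arc `a ↔ b` with `a ∈ ant(b)`
by the arrow `a → b`, and by the line `a — b` if also `b ∈ ant(a)`. -/
def angStep5 (K : MixedGraph V) : MixedGraph V where
  nodes := K.nodes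
  line a b := K.line a b ∨ (K.arc a b ∧ K.anterior a b ∧ K.anterior b a)
  arrow a b := K.arrow a b ∨ (K.arc a b ∧ K.anterior a b ∧ ¬ K.anterior b a)
  arc a b := K.arc a b ∧ ¬ K.anterior a b ∧ ¬ K.anterior b a

/-- The operation `α_{CMG.AnG}`: steps 3, 4, and 5 of the anterial-graph algorithm. -/
def cmgToAnG (H : MixedGraph V) : MixedGraph V :=
  H.angStep3.angStep4Graph.angStep5

/-- The anterial-graph algorithm `α_AnG(G; M, C) = α_{CMG.AnG}(α_CMG(G; M, C))`. -/
def alphaAnG (G : MixedGraph V) (M C : Set V) : MixedGraph V :=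
  (G.alphaCMG M C).cmgToAnG

/-- A subprimitive inducing walk from `j` to `i` in `G`: a walk from `j` to `i` all of
whose (inner) sections are collider and have all their nodes in `ant(i)`. -/
def SubprimFrom (G : MixedGraph V) (w : MWalk V) (j i : V) : Prop :=
  w.IsWalkFrom G j i ∧
  (∀ k, 0 < k → k < w.conns.length → w.colliderAt k) ∧
  (∀ k s, 0 < k → k < w.conns.length → w.sections[k]? = some s →
    ∀ x ∈ s, G.anterior x i)

end MixedGraph

/-- The image of a mixed graph under a map of node sets. -/
def MixedGraph.gmap (f : V → W) (G : MixedGraph V) : MixedGraph W where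
  nodes := f '' G.nodes
  line a b := ∃ i j, G.line i j ∧ a = f i ∧ b = f j
  arrow a b := ∃ i j, G.arrow i j ∧ a = f i ∧ b = f j
  arc a b := ∃ i j, G.arc i j ∧ a = f i ∧ b = f j

end LWF

namespace LWF

variable {V : Type*}

/-- A walk whose sections are all paths, on which every node of every collider section
lies in `C ∪ ant(C)` and no node of any non-collider section lies in `C`. -/
def GoodWalk (G : MixedGraph V) (C : Set V) (w : MWalk V) : Prop :=
  (∀ (k : ℕ) (s : List V), w.sections[k]? = some s → s.Nodup) ∧
  (∀ k s, w.sections[k]? = some s → w.colliderAt k → ∀ x ∈ s, x ∈ C ∪ G.antSet C) ∧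
  (∀ k s, w.sections[k]? = some s → ¬ w.colliderAt k → ∀ x ∈ s, x ∉ C)

/-!
Every section of a walk is connected by lines, so when a section contains a node of `C`, all
its nodes lie in `C ∪ ant(C)`; cutting the loops out of every section therefore turns a
`c`-connecting walk into a walk of the required kind with the same connecting edges.

Conversely, let a collider section contain no node of `C` but a node `b ∈ ant(C)`. Follow a
semi-directed path from `b` to its first node `z` in `C` and come back along it: arrows are
traversed forwards on the way out and backwards on the way back, so the only collider section of
this detour is the one containing `z`, and all the others avoid `C`. Inserting the detour at `b`
repairs the section without touching the connecting edges at the ends of the walk.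
-/

end LWF

namespace List

variable {α : Type*}

theorem reflTransGen_of_mem_of_isChain {r : α → α → Prop} [Std.Symm r] {l : List α}
    (hl : l.IsChain r) {x y : α} (hx : x ∈ l) (hy : y ∈ l) : Relation.ReflTransGen r x y := by
  have hne : l ≠ [] := ne_nil_of_mem hx
  have hhead : ∀ z ∈ l, Relation.ReflTransGen r (l.head hne) z :=
    hl.induction _ _ (fun _ _ h hz => hz.tail h) (fun _ => .refl)
  exact (Std.Symm.symm _ _ (hhead x hx)).trans (hhead y hy)

variable [DecidableEq α]

def shortcut : List α → List α
  | [] => []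
  | x :: l =>
    if x ∈ shortcut l then (shortcut l).drop ((shortcut l).idxOf x) else x :: shortcut l

theorem shortcut_subset : ∀ l : List α, l.shortcut ⊆ l
  | [] => by simp [shortcut]
  | x :: l => by
    unfold shortcut
    split_ifs
    · exact List.Subset.trans (drop_suffix _ _).subset
        (List.Subset.trans (shortcut_subset l) (subset_cons_self x l))
    · exact cons_subset_cons x (shortcut_subset l)

theorem nodup_shortcut : ∀ l : List α, l.shortcut.Nodup
  | [] => nodup_nil
  | x :: l => by
    unfold shortcut
    split_ifs with hx
    · exact (drop_suffix _ _).sublist.nodup (nodup_shortcut l)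
    · exact nodup_cons.2 ⟨hx, nodup_shortcut l⟩

theorem head?_shortcut : ∀ l : List α, l.shortcut.head? = l.head?
  | [] => rfl
  | x :: l => by
    unfold shortcut
    split_ifs with hx
    · rw [head?_drop, getElem?_idxOf hx, head?_cons]
    · rfl

theorem getLast?_shortcut : ∀ l : List α, l.shortcut.getLast? = l.getLast?
  | [] => rfl
  | x :: l => by
    unfold shortcut
    split_ifs with hx
    · have hl : l ≠ [] := by rintro rfl; simp [shortcut] at hx
      rw [getLast?_drop, if_neg (not_le.2 (idxOf_lt_length_iff.2 hx)), getLast?_shortcut,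
        getLast?_cons_of_ne_nil hl]
    · rw [getLast?_cons, getLast?_cons, getLast?_shortcut]

theorem IsChain.shortcut {r : α → α → Prop} :
    ∀ {l : List α}, l.IsChain r → l.shortcut.IsChain r
  | [], _ => isChain_nil
  | x :: l, h => by
    unfold List.shortcut
    split_ifs with hx
    · exact (h.tail.shortcut).suffix (drop_suffix _ _)
    · refine List.isChain_cons.2 ⟨?_, h.tail.shortcut⟩
      rw [head?_shortcut]
      exact (List.isChain_cons.1 h).1

end List

theorem Relation.ReflTransGen.exists_first_mem {α : Type*} {r : α → α → Prop} {C : Set α}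
    {a c : α} (h : Relation.ReflTransGen r a c) (hc : c ∈ C) :
    ∃ z ∈ C, Relation.ReflTransGen (fun x y => r x y ∧ x ∉ C) a z := by
  induction h using Relation.ReflTransGen.head_induction_on with
  | refl => exact ⟨c, hc, .refl⟩
  | @head a b hab _ ih =>
    obtain ⟨z, hz, hbz⟩ := ih
    by_cases ha : a ∈ C
    · exact ⟨a, ha, .refl⟩
    · exact ⟨z, hz, .head ⟨hab, ha⟩ hbz⟩

namespace LWF

variable {V : Type*}

namespace MixedGraph

theorem mem_union_antSet_of_isChain (G : MixedGraph V) [Std.Symm G.line] {C : Set V}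
    {s : List V} (hs : s.IsChain G.line) {x c : V} (hx : x ∈ s) (hc : c ∈ s) (hcC : c ∈ C) :
    x ∈ C ∪ G.antSet C := by
  by_cases hxC : x ∈ C
  · exact Or.inl hxC
  have hxc : Relation.ReflTransGen G.sdStep x c :=
    Relation.ReflTransGen.mono (fun _ _ => Or.inl) _ _
      (List.reflTransGen_of_mem_of_isChain hs hx hc)
  obtain rfl | hxc := Relation.reflTransGen_iff_eq_or_transGen.1 hxc
  · exact absurd hcC hxC
  exact Or.inr ⟨Set.mem_biUnion hcC ⟨fun h => hxC (h ▸ hcC), hxc⟩, hxC⟩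

end MixedGraph

section WalkAux

variable {G : MixedGraph V}

theorem walkAux_append {r₂ : List (Conn × List V)} {j : V} :
    ∀ {r₁ : List (Conn × List V)} {a : V},
      walkAux G a (r₁ ++ r₂) j ↔ ∃ b, walkAux G a r₁ b ∧ walkAux G b r₂ j
  | [], _ => by simp [walkAux]
  | (c, s) :: r₁, a => by
    simp only [List.cons_append, walkAux, walkAux_append]
    grind

theorem walkAux.isChain_of_mem : ∀ {r : List (Conn × List V)} {a j : V},
    walkAux G a r j → ∀ p ∈ r, p.2.IsChain G.line
  | [], _, _, _ => by simp
  | (_, _) :: _, _, _, ⟨_, hs, _, _, _, hr⟩ => by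
    rintro p (_ | ⟨_, hp⟩)
    exacts [hs, hr.isChain_of_mem p hp]

theorem walkAux.map_sections {f : List V → List V}
    (hf : ∀ s, s.IsChain G.line →
      (f s).IsChain G.line ∧ (f s).head? = s.head? ∧ (f s).getLast? = s.getLast?) :
    ∀ {r : List (Conn × List V)} {a j : V},
      walkAux G a r j → walkAux G a (r.map (Prod.map id f)) j
  | [], _, _, h => h
  | (_, s) :: _, _, _, ⟨hne, hs, ⟨b, hb, hbc⟩, e, he, hr⟩ => by
    obtain ⟨hfs, hhead, hlast⟩ := hf s hs
    refine ⟨?_, hfs, ⟨b, hhead ▸ hb, hbc⟩, e, hlast ▸ he, hr.map_sections hf⟩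
    rintro h
    simp [h, hb] at hhead

end WalkAux

namespace MWalk

theorem endpointIdentical_of_conns {w w' : MWalk V} (h₀ : w'.conns.head? = w.conns.head?)
    (h₁ : w'.conns.getLast? = w.conns.getLast?) : EndpointIdentical w w' := by
  simp [EndpointIdentical, headAtStart, headAtEnd, ← List.head?_eq_getElem?,
    ← List.getLast?_eq_getElem?, h₀, h₁]

theorem IsWalkFrom.isChain_of_mem_sections {G : MixedGraph V} {w : MWalk V} {i j : V}
    (hw : w.IsWalkFrom G i j) {s : List V} (hs : s ∈ w.sections) : s.IsChain G.line := by
  obtain ⟨-, hfirst, -, e, -, hrest⟩ := hw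
  simp only [sections, List.mem_cons, List.mem_map] at hs
  obtain rfl | ⟨p, hp, rfl⟩ := hs
  exacts [hfirst, hrest.isChain_of_mem p hp]

def mapSections (f : List V → List V) (w : MWalk V) : MWalk V :=
  ⟨f w.first, w.rest.map (Prod.map id f)⟩

theorem IsWalkFrom.mapSections {G : MixedGraph V} {f : List V → List V} {w : MWalk V}
    {i j : V}
    (hf : ∀ s, s.IsChain G.line →
      (f s).IsChain G.line ∧ (f s).head? = s.head? ∧ (f s).getLast? = s.getLast?)
    (hw : w.IsWalkFrom G i j) : (w.mapSections f).IsWalkFrom G i j := by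
  obtain ⟨-, hfirst, hi, e, he, hrest⟩ := hw
  obtain ⟨hfs, hhead, hlast⟩ := hf _ hfirst
  refine ⟨fun h => ?_, hfs, hhead ▸ hi, e, hlast ▸ he, hrest.map_sections hf⟩
  change f w.first = [] at h
  simp [h, hi] at hhead

section

variable (f : List V → List V) (w : MWalk V)

@[simp] theorem conns_mapSections : (w.mapSections f).conns = w.conns := by
  simp [mapSections, conns, Function.comp_def]

@[simp] theorem sections_mapSections : (w.mapSections f).sections = w.sections.map f := by
  simp [mapSections, sections, Function.comp_def]

@[simp] theorem colliderAt_mapSections (k : ℕ) :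
    (w.mapSections f).colliderAt k ↔ w.colliderAt k := by
  simp [colliderAt]

theorem endpointIdentical_mapSections : EndpointIdentical w (w.mapSections f) :=
  endpointIdentical_of_conns (by simp) (by simp)

end

end MWalk

theorem exists_goodWalk_of_cConnecting {G : MixedGraph V} [Std.Symm G.line] {C : Set V}
    {w : MWalk V} {i j : V} (hw : w.IsWalkFrom G i j) (hc : w.cConnecting C) :
    ∃ w' : MWalk V, w'.IsWalkFrom G i j ∧ GoodWalk G C w' ∧ EndpointIdentical w w' := by
  classical
  refine ⟨w.mapSections List.shortcut,
    hw.mapSections fun s hs => ⟨hs.shortcut, s.head?_shortcut, s.getLast?_shortcut⟩, ?_,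
    w.endpointIdentical_mapSections _⟩
  have hsec : ∀ (k : ℕ) (s : List V), (w.mapSections List.shortcut).sections[k]? = some s →
      ∃ s₀ : List V, w.sections[k]? = some s₀ ∧ s = s₀.shortcut := by
    intro k s hs
    simp only [MWalk.sections_mapSections, List.getElem?_map, Option.map_eq_some_iff] at hs
    obtain ⟨s₀, hs₀, rfl⟩ := hs
    exact ⟨s₀, hs₀, rfl⟩
  refine ⟨fun k s hs => ?_, fun k s hs hk x hx => ?_, fun k s hs hk x hx => ?_⟩
  · obtain ⟨s₀, -, rfl⟩ := hsec k s hs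
    exact s₀.nodup_shortcut
  · obtain ⟨s₀, hs₀, rfl⟩ := hsec k s hs
    rw [MWalk.colliderAt_mapSections] at hk
    obtain ⟨c, hc₀, hcC⟩ := hc.1 k s₀ hs₀ hk
    exact G.mem_union_antSet_of_isChain
      (hw.isChain_of_mem_sections (List.mem_of_getElem? hs₀)) (s₀.shortcut_subset hx) hc₀ hcC
  · obtain ⟨s₀, hs₀, rfl⟩ := hsec k s hs
    rw [MWalk.colliderAt_mapSections] at hk
    exact hc.2 k s₀ hs₀ hk x (s₀.shortcut_subset hx)

/-- The connecting edge leading out of the first section of `r`; `nx` if `r` is empty. -/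
def firstConn (r : List (Conn × List V)) (nx : Option Conn) : Option Conn :=
  (r.map Prod.fst).head?.or nx

theorem firstConn_append (r₁ r₂ : List (Conn × List V)) (nx : Option Conn) :
    firstConn (r₁ ++ r₂) nx = firstConn r₁ (firstConn r₂ nx) := by
  simp [firstConn, List.head?_append, Option.or_assoc]

/-- A section entered through `c` and left through `o` is a collider. -/
def IsColliderPair (c : Conn) (o : Option Conn) : Prop :=
  c.headTowardsNext ∧ ∃ c', o = some c' ∧ c'.headTowardsPrev

theorem not_isColliderPair_fwd (c : Conn) : ¬ IsColliderPair c (some .fwd) := by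
  rintro ⟨-, _, ⟨⟩, h⟩
  exact h

/-- `Q b s` holds for each section `s` of the tail `r` of a walk, where `b` says whether `s` is
a collider and `nx` is the connecting edge following `r`. -/
def ForallSections (Q : Prop → List V → Prop) : List (Conn × List V) → Option Conn → Prop
  | [], _ => True
  | (c, s) :: r, nx => Q (IsColliderPair c (firstConn r nx)) s ∧ ForallSections Q r nx

theorem forallSections_append (Q : Prop → List V → Prop) (r₂ : List (Conn × List V))
    (nx : Option Conn) : ∀ r₁ : List (Conn × List V),
      ForallSections Q (r₁ ++ r₂) nx ↔
        ForallSections Q r₁ (firstConn r₂ nx) ∧ ForallSections Q r₂ nx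
  | [] => by simp [ForallSections]
  | (c, s) :: r₁ => by
    simp only [List.cons_append, ForallSections, firstConn_append,
      forallSections_append Q r₂ nx r₁, and_assoc]

theorem forallSections_iff (Q : Prop → List V → Prop) (nx : Option Conn) :
    ∀ r : List (Conn × List V), ForallSections Q r nx ↔
      ∀ k c s, r[k]? = some (c, s) → Q (IsColliderPair c (firstConn (r.drop (k + 1)) nx)) s
  | [] => by simp [ForallSections]
  | (c, s) :: r => by
    rw [ForallSections, forallSections_iff Q nx r]
    constructor
    · rintro ⟨h₀, h⟩ (_ | k) c' s' hk
      · obtain ⟨rfl, rfl⟩ : c = c' ∧ s = s' := by simpa using hk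
        exact h₀
      · exact h k c' s' hk
    · intro h
      exact ⟨h 0 c s rfl, fun k c' s' hk => h (k + 1) c' s' hk⟩

namespace MWalk

theorem not_colliderAt_zero (w : MWalk V) : ¬ w.colliderAt 0 :=
  fun h => h.1.false

theorem colliderAt_succ_iff {w : MWalk V} {k : ℕ} {c : Conn} {s : List V}
    (h : w.rest[k]? = some (c, s)) :
    w.colliderAt (k + 1) ↔ IsColliderPair c (firstConn (w.rest.drop (k + 1)) none) := by
  have hc : w.conns[k]? = some c := by simp [conns, h]
  have hnext : firstConn (w.rest.drop (k + 1)) none = w.conns[k + 1]? := by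
    simp [firstConn, conns, List.head?_drop]
  rw [hnext]
  simp only [colliderAt, IsColliderPair, Nat.add_sub_cancel, hc, Option.some_inj,
    exists_eq_left']
  constructor
  · exact fun h => h.2.2
  · rintro ⟨hcn, c', hc', hcp⟩
    exact ⟨k.succ_pos, (List.getElem?_eq_some_iff.1 hc').1, hcn, c', hc', hcp⟩

theorem forall_sections_iff (Q : Prop → List V → Prop) (w : MWalk V) :
    (∀ k s, w.sections[k]? = some s → Q (w.colliderAt k) s) ↔
      Q False w.first ∧ ForallSections Q w.rest none := by
  rw [forallSections_iff]
  have h₀ : w.colliderAt 0 = False := eq_false w.not_colliderAt_zero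
  constructor
  · intro h
    refine ⟨h₀ ▸ h 0 w.first rfl, fun k c s hk => ?_⟩
    rw [← propext (colliderAt_succ_iff hk)]
    exact h (k + 1) s (by simp [sections, hk])
  · rintro ⟨hfirst, hrest⟩ (_ | k) s hs
    · obtain rfl : w.first = s := by simpa [sections] using hs
      rwa [h₀]
    · obtain ⟨⟨c, s'⟩, hk, rfl⟩ : ∃ p, w.rest[k]? = some p ∧ p.2 = s := by
        simpa [sections] using hs
      rw [propext (colliderAt_succ_iff hk)]
      exact hrest k c s' hk

end MWalk

def CConnectingSection (C : Set V) (b : Prop) (s : List V) : Prop :=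
  (b → ∃ x ∈ s, x ∈ C) ∧ (¬ b → ∀ x ∈ s, x ∉ C)

def AnteriorSection (G : MixedGraph V) (C : Set V) (b : Prop) (s : List V) : Prop :=
  (b → ∀ x ∈ s, x ∈ C ∪ G.antSet C) ∧ (¬ b → ∀ x ∈ s, x ∉ C)

theorem CConnectingSection.cons {C : Set V} {b : Prop} {s : List V} {x : V} (hx : x ∉ C)
    (h : CConnectingSection C b s) : CConnectingSection C b (x :: s) := by
  refine ⟨fun hb => ?_, fun hb y hy => ?_⟩
  · obtain ⟨y, hy, hyC⟩ := h.1 hb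
    exact ⟨y, List.mem_cons_of_mem x hy, hyC⟩
  · obtain rfl | hy := List.mem_cons.1 hy
    exacts [hx, h.2 hb y hy]

theorem MWalk.cConnecting_iff {w : MWalk V} {C : Set V} :
    w.cConnecting C ↔
      ∀ k s, w.sections[k]? = some s → CConnectingSection C (w.colliderAt k) s :=
  ⟨fun h k s hs => ⟨h.1 k s hs, h.2 k s hs⟩,
    fun h => ⟨fun k s hs => (h k s hs).1, fun k s hs => (h k s hs).2⟩⟩

theorem GoodWalk.anteriorSection {G : MixedGraph V} {C : Set V} {w : MWalk V}
    (h : GoodWalk G C w) :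
    ∀ k s, w.sections[k]? = some s → AnteriorSection G C (w.colliderAt k) s :=
  fun k s hs => ⟨h.2.1 k s hs, h.2.2 k s hs⟩

section CConnectingOfGoodWalk

variable {G : MixedGraph V} [Std.Symm G.line] {C : Set V}

/-- `(c, F) :: M` is the detour `x ⋯ z ⋯ x ts` that replaces a collider section `x :: ts`
entered through `c`. -/
theorem exists_detour {x z : V}
    (hxz : Relation.ReflTransGen (fun a b => G.sdStep a b ∧ a ∉ C) x z) (hz : z ∈ C) :
    ∀ {ts : List V} {t : V}, (x :: ts).IsChain G.line → (x :: ts).getLast? = some t →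
      (∀ y ∈ ts, y ∉ C) →
      ∃ F M, F.head? = some x ∧ F.IsChain G.line ∧
        (∃ e, F.getLast? = some e ∧ walkAux G e M t) ∧
        ∀ c nx, IsColliderPair c nx →
          ForallSections (CConnectingSection C) ((c, F) :: M) nx := by
  induction hxz using Relation.ReflTransGen.head_induction_on with
  | refl =>
    intro ts t hch ht _
    exact ⟨z :: ts, [], rfl, hch, ⟨t, ht, rfl⟩,
      fun c nx hc => ⟨⟨fun _ => ⟨z, List.mem_cons_self, hz⟩, (· hc |>.elim)⟩, trivial⟩⟩
  | @head x y hxy _ ih =>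
    obtain ⟨hxy | hxy, hxC⟩ := hxy
    · intro ts t hch ht hts
      obtain ⟨F, M, hF, hFch, ⟨e, he, hM⟩, hsec⟩ := ih (ts := x :: ts)
        (List.isChain_cons_cons.2 ⟨Std.Symm.symm _ _ hxy, hch⟩)
        (by rwa [List.getLast?_cons_cons])
        (fun u hu => (List.mem_cons.1 hu).elim (· ▸ hxC) (hts u))
      obtain ⟨F, rfl⟩ := List.head?_eq_some_iff.1 hF
      refine ⟨x :: y :: F, M, rfl, List.isChain_cons_cons.2 ⟨hxy, hFch⟩,
        ⟨e, by rwa [List.getLast?_cons_cons], hM⟩, fun c nx hc => ?_⟩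
      obtain ⟨hyF, hM⟩ := hsec c nx hc
      exact ⟨hyF.cons hxC, hM⟩
    · intro ts t hch ht hts
      obtain ⟨F, M, hF, hFch, ⟨e, he, hM⟩, hsec⟩ := ih (ts := []) (List.isChain_singleton y) rfl
        (by simp)
      have hFne : F ≠ [] := by rintro rfl; simp at hF
      refine ⟨[x], (.fwd, F) :: M ++ [(.bwd, x :: ts)], rfl, List.isChain_singleton x,
        ⟨x, rfl, walkAux_append.2 ⟨y, ⟨hFne, hFch, ⟨y, hF, hxy⟩, e, he, hM⟩,
          show walkAux G y [(.bwd, x :: ts)] t from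
            ⟨List.cons_ne_nil _ _, hch, ⟨x, rfl, hxy⟩, t, ht, rfl⟩⟩⟩, fun c nx _ => ?_⟩
      refine ⟨⟨fun h => (not_isColliderPair_fwd c h).elim, fun _ u hu => ?_⟩,
        (forallSections_append _ _ _ _).2
          ⟨hsec .fwd (some .bwd) ⟨trivial, .bwd, rfl, trivial⟩,
            ⟨fun h => h.1.elim, fun _ u hu => ?_⟩, trivial⟩⟩
      · rw [List.mem_singleton.1 hu]
        exact hxC
      · exact (List.mem_cons.1 hu).elim (· ▸ hxC) (hts u)

theorem exists_cConnecting_rest {j : V} :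
    ∀ {r : List (Conn × List V)} {e : V}, walkAux G e r j →
      ForallSections (AnteriorSection G C) r none →
      ∃ r', walkAux G e r' j ∧ ForallSections (CConnectingSection C) r' none ∧
        (r'.map Prod.fst).head? = (r.map Prod.fst).head? ∧
        (r'.map Prod.fst).getLast? = (r.map Prod.fst).getLast?
  | [], _, h, _ => ⟨[], h, trivial, rfl, rfl⟩
  | (c, s) :: r, e, ⟨hne, hch, ⟨b, hb, hcb⟩, e₂, he₂, hr⟩, ⟨hs, hrs⟩ => by
    obtain ⟨r', hr', hr's, hhead, hlast⟩ := exists_cConnecting_rest hr hrs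
    have hfc : firstConn r' none = firstConn r none := by simp only [firstConn, hhead]
    by_cases hdetour : IsColliderPair c (firstConn r none) ∧ ∀ x ∈ s, x ∉ C
    · obtain ⟨hcoll, hsC⟩ := hdetour
      obtain ⟨ts, rfl⟩ := List.head?_eq_some_iff.1 hb
      have hbant : b ∈ G.antSet C :=
        (hs.1 hcoll b List.mem_cons_self).resolve_left (hsC b List.mem_cons_self)
      obtain ⟨c₀, hc₀, -, hbc₀⟩ := Set.mem_iUnion₂.1 hbant.1
      obtain ⟨z, hz, hbz⟩ := hbc₀.to_reflTransGen.exists_first_mem hc₀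
      obtain ⟨F, M, hF, hFch, ⟨e₁, he₁, hM⟩, hsec⟩ :=
        exists_detour hbz hz hch he₂ fun y hy => hsC y (List.mem_cons_of_mem b hy)
      have hFne : F ≠ [] := by rintro rfl; simp at hF
      obtain ⟨c', hc'⟩ : ∃ c', (r.map Prod.fst).getLast? = some c' := by
        obtain ⟨-, c', hc', -⟩ := hcoll
        rcases r with _ | ⟨p, r⟩
        · simp [firstConn] at hc'
        · exact ⟨_, List.getLast?_eq_some_getLast (by simp)⟩
      refine ⟨(c, F) :: M ++ r',
        walkAux_append.2 ⟨e₂, ⟨hFne, hFch, ⟨b, hF, hcb⟩, e₁, he₁, hM⟩, hr'⟩,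
        (forallSections_append _ _ _ _).2 ⟨hsec c _ (hfc ▸ hcoll), hr's⟩, by simp, ?_⟩
      simp [List.getLast?_append, List.getLast?_cons, hlast, hc']
    · refine ⟨(c, s) :: r', ⟨hne, hch, ⟨b, hb, hcb⟩, e₂, he₂, hr'⟩, ⟨?_, hr's⟩, by simp,
        by simp [List.getLast?_cons, hlast]⟩
      rw [hfc]
      exact ⟨fun hcoll => by simpa using not_and.1 hdetour hcoll, hs.2⟩

theorem exists_cConnecting_of_goodWalk {w : MWalk V} {i j : V} (hw : w.IsWalkFrom G i j)
    (hg : GoodWalk G C w) :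
    ∃ w' : MWalk V, w'.IsWalkFrom G i j ∧ w'.cConnecting C ∧ EndpointIdentical w w' := by
  obtain ⟨hne, hch, hi, e, he, hr⟩ := hw
  obtain ⟨hfirst, hrest⟩ := (MWalk.forall_sections_iff _ w).1 hg.anteriorSection
  obtain ⟨r', hr', hr's, hhead, hlast⟩ := exists_cConnecting_rest hr hrest
  exact ⟨⟨w.first, r'⟩, ⟨hne, hch, hi, e, he, hr'⟩,
    MWalk.cConnecting_iff.2
      ((MWalk.forall_sections_iff _ _).2 ⟨⟨False.elim, hfirst.2⟩, hr's⟩),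
    MWalk.endpointIdentical_of_conns hhead hlast⟩

end CConnectingOfGoodWalk

theorem stmt0_general (G : MixedGraph V) (hG : G.IsCG) (C : Set V) (i j : V) :
    ((∃ w : MWalk V, w.IsWalkFrom G i j ∧ w.cConnecting C) ↔
      (∃ w : MWalk V, w.IsWalkFrom G i j ∧ GoodWalk G C w)) ∧
    (∀ w : MWalk V, w.IsWalkFrom G i j → w.cConnecting C →
      ∃ w' : MWalk V, w'.IsWalkFrom G i j ∧ GoodWalk G C w' ∧ EndpointIdentical w w') ∧
    (∀ w : MWalk V, w.IsWalkFrom G i j → GoodWalk G C w →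
      ∃ w' : MWalk V, w'.IsWalkFrom G i j ∧ w'.cConnecting C ∧
        EndpointIdentical w w') := by
  have : Std.Symm G.line := ⟨hG.1.1.1⟩
  refine ⟨⟨fun ⟨w, hw, hc⟩ => ?_, fun ⟨w, hw, hg⟩ => ?_⟩,
    fun _ hw hc => exists_goodWalk_of_cConnecting hw hc,
    fun _ hw hg => exists_cConnecting_of_goodWalk hw hg⟩
  · obtain ⟨w', hw', hg', -⟩ := exists_goodWalk_of_cConnecting hw hc
    exact ⟨w', hw', hg'⟩
  · obtain ⟨w', hw', hc', -⟩ := exists_cConnecting_of_goodWalk hw hg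
    exact ⟨w', hw', hc'⟩

/-- There is a `c`-connecting walk between `i` and `j` given `C` iff there is a walk
between `i` and `j` all of whose sections are paths, on which every node of every
collider section lies in `C ∪ ant(C)` and no node of any non-collider section lies in
`C`; moreover the two walks can be chosen to be endpoint-identical. -/
theorem stmt0 (G : MixedGraph V) (hG : G.IsCG) (C : Set V) (hC : C ⊆ G.nodes)
    (i j : V) (hi : i ∈ G.nodes) (hj : j ∈ G.nodes) :
    ((∃ w : MWalk V, w.IsWalkFrom G i j ∧ w.cConnecting C) ↔
      (∃ w : MWalk V, w.IsWalkFrom G i j ∧ GoodWalk G C w)) ∧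
    (∀ w : MWalk V, w.IsWalkFrom G i j → w.cConnecting C →
      ∃ w' : MWalk V, w'.IsWalkFrom G i j ∧ GoodWalk G C w' ∧ EndpointIdentical w w') ∧
    (∀ w : MWalk V, w.IsWalkFrom G i j → GoodWalk G C w →
      ∃ w' : MWalk V, w'.IsWalkFrom G i j ∧ w'.cConnecting C ∧
        EndpointIdentical w w') :=
  stmt0_general G hG C i j

end LWF
end

section
/- For every chain mixed graph G on node set V and every M ⊆ V, the graph α_CMG(G;M,∅) produced by the marginalization algorithm is a chain mixed graph. -/
/-!
Every edge produced by steps 1 and 2 of the marginalization algorithm is witnessed in `G`: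
a line `i — j` by a path of lines of `G`, an arrow `i → j` by a semi-directed walk of `G`
from `i` to `j` through an arrow, and an arc by nothing more than `i ≠ j`. Each rule
concatenates the witnesses of its two edges at the eliminated node `m`, so the invariant
survives the closure. A semi-directed cycle with an arrow in the new graph therefore lifts
to one in `G`, and deleting `M` afterwards cannot create one.
-/

namespace LWF

variable {V : Type*}

namespace MixedGraph

variable {G : MixedGraph V}

def ArrowReach (G : MixedGraph V) (a b : V) : Prop :=
  ∃ x y, Relation.ReflTransGen G.sdStep a x ∧ G.arrow x y ∧ Relation.ReflTransGen G.sdStep y b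

theorem ArrowReach.of_arrow {a b : V} (h : G.arrow a b) : G.ArrowReach a b :=
  ⟨a, b, .refl, h, .refl⟩

theorem ArrowReach.reflTransGen {a b : V} (h : G.ArrowReach a b) :
    Relation.ReflTransGen G.sdStep a b :=
  let ⟨_, _, hax, hxy, hyb⟩ := h
  hax.trans ((Relation.ReflTransGen.single (show G.sdStep _ _ from Or.inr hxy)).trans hyb)

theorem ArrowReach.trans_reflTransGen {a b c : V} (h : G.ArrowReach a b)
    (hbc : Relation.ReflTransGen G.sdStep b c) : G.ArrowReach a c :=
  let ⟨x, y, hax, hxy, hyb⟩ := h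
  ⟨x, y, hax, hxy, hyb.trans hbc⟩

theorem ArrowReach.reflTransGen_trans {a b c : V} (hab : Relation.ReflTransGen G.sdStep a b)
    (h : G.ArrowReach b c) : G.ArrowReach a c :=
  let ⟨x, y, hbx, hxy, hyc⟩ := h
  ⟨x, y, hab.trans hbx, hxy, hyc⟩

theorem NoArrowSemiDirectedCycle.not_arrowReach_self (hG : G.NoArrowSemiDirectedCycle)
    (a : V) : ¬ G.ArrowReach a a :=
  fun ⟨x, y, hax, hxy, hya⟩ => hG x y hxy (hya.trans hax)

theorem NoArrowSemiDirectedCycle.of_lift {H : MixedGraph V} (hG : G.NoArrowSemiDirectedCycle)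
    (hstep : ∀ i j, H.sdStep i j → Relation.ReflTransGen G.sdStep i j)
    (harrow : ∀ i j, H.arrow i j → G.ArrowReach i j) : H.NoArrowSemiDirectedCycle := by
  intro a b hab hba
  exact hG.not_arrowReach_self a
    ((harrow a b hab).trans_reflTransGen (Relation.reflTransGen_closed hstep b a hba))

theorem reflTransGen_sdStep_of_line {i j : V} (h : Relation.ReflTransGen G.line i j) :
    Relation.ReflTransGen G.sdStep i j :=
  Relation.ReflTransGen.mono (fun _ _ => Or.inl) _ _ h

theorem reflTransGen_line_symm (hsym : ∀ i j, G.line i j → G.line j i) {i j : V}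
    (h : Relation.ReflTransGen G.line i j) : Relation.ReflTransGen G.line j i :=
  Relation.reflTransGen_swap.mp (Relation.ReflTransGen.mono (fun a b hab => hsym a b hab) _ _ h)

theorem lineSection.reflTransGen {p : List V} {a b : V} (h : G.lineSection p a b) :
    Relation.ReflTransGen G.line a b := by
  obtain ⟨hne, hchain, -, hhead, hlast⟩ := h
  rw [List.head?_eq_some_head hne, Option.some.injEq] at hhead
  rw [List.getLast?_eq_some_getLast hne, Option.some.injEq] at hlast
  subst hhead hlast
  exact List.relationReflTransGen_of_exists_isChain p hchain hne

theorem lineSection.head_mem {p : List V} {a b : V} (h : G.lineSection p a b) : a ∈ p :=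
  List.mem_of_mem_head? h.2.2.2.1

theorem IsCMG.deleteNodes (hG : G.IsCMG) (M : Set V) : (G.deleteNodes M).IsCMG := by
  obtain ⟨⟨lsym, lirr, airr, csym, cirr, lnod, anod, cnod⟩, hcyc⟩ := hG
  refine ⟨⟨?_, ?_, ?_, ?_, ?_, ?_, ?_, ?_⟩, hcyc.of_lift ?_ ?_⟩
  · exact fun i j ⟨h, hi, hj⟩ => ⟨lsym i j h, hj, hi⟩
  · exact fun i h => lirr i h.1
  · exact fun i h => airr i h.1
  · exact fun i j ⟨h, hi, hj⟩ => ⟨csym i j h, hj, hi⟩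
  · exact fun i h => cirr i h.1
  · exact fun i j ⟨h, hi, hj⟩ => ⟨⟨(lnod i j h).1, hi⟩, (lnod i j h).2, hj⟩
  · exact fun i j ⟨h, hi, hj⟩ => ⟨⟨(anod i j h).1, hi⟩, (anod i j h).2, hj⟩
  · exact fun i j ⟨h, hi, hj⟩ => ⟨⟨(cnod i j h).1, hi⟩, (cnod i j h).2, hj⟩
  · rintro i j (h | h)
    exacts [.single (Or.inl h.1), .single (Or.inr h.1)]
  · exact fun i j h => .of_arrow h.1

def MargCoreInv (G : MixedGraph V) : EKind → V → V → Prop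
  | .ln, i, j => Relation.ReflTransGen G.line i j ∧ i ≠ j ∧ i ∈ G.nodes ∧ j ∈ G.nodes
  | .ar, i, j => G.ArrowReach i j ∧ i ∈ G.nodes ∧ j ∈ G.nodes
  | .bi, i, j => i ≠ j ∧ i ∈ G.nodes ∧ j ∈ G.nodes

theorem margGen9.margCoreInv (hG : G.IsMixedGraph) {M : Set V} {i j : V}
    (h : G.margGen9 M i j) : G.MargCoreInv .bi i j := by
  obtain ⟨-, -, -, -, -, -, anod, cnod⟩ := hG
  obtain ⟨m, -, p, t, hmi, hsec, htj, hjp, -⟩ := h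
  exact ⟨fun hij => hjp (hij ▸ hsec.head_mem), (anod m i hmi).2, (cnod t j htj).2⟩

theorem margCoreInv_of_margCl (hG : G.IsMixedGraph) {M : Set V} {k : EKind} {i j : V}
    (h : MargCl (G.margStep1 M) M k i j) : G.MargCoreInv k i j := by
  have ⟨lsym, lirr, _, _, cirr, lnod, anod, cnod⟩ := hG
  induction h with
  | base_ln h => exact ⟨.single h, fun hij => lirr _ (hij ▸ h), lnod _ _ h⟩
  | base_ar h =>
    rcases h with h | ⟨m, -, p, t, hmj, hsec, hit, -⟩
    · exact ⟨.of_arrow h, anod _ _ h⟩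
    · have htj := reflTransGen_sdStep_of_line (reflTransGen_line_symm lsym hsec.reflTransGen)
      exact ⟨(ArrowReach.of_arrow hit).trans_reflTransGen htj, (anod _ _ hit).1,
        (anod _ _ hmj).2⟩
  | base_bi h =>
    rcases h with h | h | h
    · exact ⟨fun hij => cirr _ (hij ▸ h), cnod _ _ h⟩
    · exact h.margCoreInv hG
    · obtain ⟨hji, hj, hi⟩ := h.margCoreInv hG
      exact ⟨hji.symm, hi, hj⟩
  | symm_ln _ ih =>
    obtain ⟨hij, hne, hi, hj⟩ := ih
    exact ⟨reflTransGen_line_symm lsym hij, hne.symm, hj, hi⟩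
  | symm_bi _ ih => exact ⟨ih.1.symm, ih.2.2, ih.2.1⟩
  | r1 _ _ _ _ ihjm ihmi =>
    exact ⟨ihjm.1.trans_reflTransGen ihmi.1.reflTransGen, ihjm.2.1, ihmi.2.2⟩
  | r2 _ _ _ _ ihmj ihmi =>
    exact ⟨.reflTransGen_trans (reflTransGen_sdStep_of_line
      (reflTransGen_line_symm lsym ihmj.1)) ihmi.1, ihmj.2.2.2, ihmi.2.2⟩
  | r3 _ hij _ _ ihim ihmj => exact ⟨hij, ihim.2.1, ihmj.2.2.2⟩
  | r4 _ hij _ _ ihmi ihmj => exact ⟨hij, ihmi.2.2, ihmj.2.2⟩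
  | r5 _ hij _ _ ihmi ihmj => exact ⟨hij, ihmi.2.2, ihmj.2.2⟩
  | r6 _ _ _ _ ihim ihjm =>
    exact ⟨ihjm.1.trans_reflTransGen (reflTransGen_sdStep_of_line
      (reflTransGen_line_symm lsym ihim.1)), ihjm.2.1, ihim.2.2.1⟩
  | r7 _ hij _ _ ihim ihmj => exact ⟨ihim.1.trans ihmj.1, hij, ihim.2.2.1, ihmj.2.2.2⟩

theorem IsCMG.margCore (hG : G.IsCMG) (M : Set V) : (G.margCore M).IsCMG := by
  have inv : ∀ {k i j}, MargCl (G.margStep1 M) M k i j → G.MargCoreInv k i j :=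
    margCoreInv_of_margCl hG.1
  refine ⟨⟨fun _ _ => .symm_ln, fun i h => (inv h).2.1 rfl,
    fun i h => hG.2.not_arrowReach_self i (inv h).1, fun _ _ => .symm_bi,
    fun i h => (inv h).1 rfl, fun _ _ h => (inv h).2.2, fun _ _ h => (inv h).2,
    fun _ _ h => (inv h).2⟩, hG.2.of_lift ?_ fun _ _ h => (inv h).1⟩
  rintro i j (h | h)
  exacts [reflTransGen_sdStep_of_line (inv h).1, (inv h).1.reflTransGen]

end MixedGraph

theorem stmt1_general (G : MixedGraph V) (hG : G.IsCMG) (M : Set V) :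
    (G.alphaMarg M).IsCMG :=
  (hG.margCore M).deleteNodes M

/-- Graphs generated by the marginalization algorithm are chain mixed graphs. -/
theorem stmt1 (G : MixedGraph V) (hG : G.IsCMG) (M : Set V) (hM : M ⊆ G.nodes) :
    (G.alphaMarg M).IsCMG :=
  stmt1_general G hG M

end LWF
end

section
/- If G is a chain graph on node set V and C ⊆ V, then the graph α_CMG(G;∅,C) produced by the conditioning algorithm is a chain graph. Consequently, the class of chain graphs with the LWF Markov property is stable under conditioning. -/
/-!
In a chain graph the conditioning algorithm only adds lines: step 3 joins `u` and `w` for each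
collider `u → ◦ — ⋯ — ◦ ← w` inside `S = C ∪ ant(C)`, and step 4 turns the arrows into `S` into
lines. As `S` is closed under taking anteriors, a semi-directed walk of the new graph that leaves
`S` stays outside `S` and is a semi-directed walk of `G`, so no semi-directed cycle with an arrow
appears.

For the separations, c-connecting walks are built section by section. A walk of `α(G; ∅, C)`
given `C₁` is followed in `G` given `C ∪ C₁`: outside `S` nothing changes, and a section that
must be closed as a collider inside `S` lies in `ant(C)`, so the walk can make a detour along a
semi-directed path to `C` and back. Conversely, a walk of `G` is followed in `α(G; ∅, C)` by
keeping its sections inside `S` open, each collider inside `S` being bypassed by a line of step 3.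
-/

namespace LWF

variable {V : Type*}

open Relation

namespace MixedGraph

section LineConnectivity

variable (H : MixedGraph V) (D : Set V)

def LineConn : V → V → Prop := ReflTransGen H.line

def LineConnAvoid (a b : V) : Prop :=
  a ∉ D ∧ ReflTransGen (fun x y => H.line x y ∧ y ∉ D) a b

def LineConnVia (a b : V) : Prop := ∃ c ∈ D, H.LineConn a c ∧ H.LineConn c b

def arrowAlong : Bool → V → V → Prop
  | true, a, v => H.arrow a v
  | false, a, v => H.arrow v a

variable {H D}

namespace LineConnAvoid

lemma refl {a : V} (ha : a ∉ D) : H.LineConnAvoid D a a := ⟨ha, .refl⟩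

lemma trans {a b c : V} (h : H.LineConnAvoid D a b) (h' : H.LineConnAvoid D b c) :
    H.LineConnAvoid D a c :=
  ⟨h.1, h.2.trans h'.2⟩

lemma tail {a b c : V} (h : H.LineConnAvoid D a b) (hbc : H.line b c) (hc : c ∉ D) :
    H.LineConnAvoid D a c :=
  ⟨h.1, h.2.tail ⟨hbc, hc⟩⟩

lemma notMem_right {a b : V} (h : H.LineConnAvoid D a b) : b ∉ D := by
  obtain ⟨ha, h⟩ := h
  induction h with
  | refl => exact ha
  | tail _ h _ => exact h.2

lemma lineConn {a b : V} (h : H.LineConnAvoid D a b) : H.LineConn a b :=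
  ReflTransGen.mono (fun _ _ hxy => hxy.1) _ _ h.2

end LineConnAvoid

lemma LineConn.lineConnAvoid {a b : V} (h : H.LineConn a b)
    (hD : ∀ z, H.LineConn a z → z ∉ D) : H.LineConnAvoid D a b := by
  refine ⟨hD a .refl, ?_⟩
  induction h with
  | refl => exact .refl
  | tail hab hbc ih => exact ih.tail ⟨hbc, hD _ (hab.tail hbc)⟩

end LineConnectivity

section Lists

variable {H : MixedGraph V} {D : Set V}

lemma lineConn_of_mem {s : List V} {v e x : V} (hch : s.IsChain H.line) (hh : s.head? = some v)
    (hl : s.getLast? = some e) (hx : x ∈ s) : H.LineConn v x ∧ H.LineConn x e := by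
  have hne : s ≠ [] := by rintro rfl; simp at hh
  rw [List.head?_eq_some_head hne, Option.some.injEq] at hh
  rw [List.getLast?_eq_some_getLast hne, Option.some.injEq] at hl
  exact ⟨List.IsChain.induction (H.LineConn v ·) s hch (fun _ _ hxy hx => hx.tail hxy)
      (fun _ => hh ▸ .refl) x hx,
    List.IsChain.backwards_induction (H.LineConn · e) s hch (fun _ _ hxy hy => hy.head hxy)
      (fun _ => hl ▸ .refl) x hx⟩

lemma lineConnAvoid_of_isChain {s : List V} {v e : V} (hch : s.IsChain H.line)
    (hh : s.head? = some v) (hl : s.getLast? = some e) (hD : ∀ x ∈ s, x ∉ D) :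
    H.LineConnAvoid D v e := by
  have hv := List.mem_of_mem_head? hh
  refine ⟨hD v hv, ?_⟩
  have hne : s ≠ [] := List.ne_nil_of_mem hv
  rw [List.head?_eq_some_head hne, Option.some.injEq] at hh
  rw [List.getLast?_eq_some_getLast hne, Option.some.injEq] at hl
  have hch' : s.IsChain (fun x y => H.line x y ∧ y ∉ D) :=
    hch.imp_of_mem_imp fun _ _ _ hy hxy => ⟨hxy, hD _ hy⟩
  exact hh ▸ hl ▸ List.relationReflTransGen_of_exists_isChain s hch' hne

lemma lineConnVia_of_isChain {s : List V} {v e x : V} (hch : s.IsChain H.line)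
    (hh : s.head? = some v) (hl : s.getLast? = some e) (hx : x ∈ s) (hxD : x ∈ D) :
    H.LineConnVia D v e :=
  ⟨x, hxD, lineConn_of_mem hch hh hl hx⟩

lemma lineConn_of_lineSection {p : List V} {a b : V} (h : H.lineSection p a b) :
    H.LineConn a b :=
  (lineConn_of_mem h.2.1 h.2.2.2.1 h.2.2.2.2 (List.mem_of_mem_getLast? h.2.2.2.2)).1

lemma exists_isChain_of_lineConn {a b c : V} (hab : H.LineConn a b) (hbc : H.LineConn b c) :
    ∃ l : List V, (a :: l).IsChain H.line ∧ (a :: l).getLast? = some c ∧ b ∈ a :: l := by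
  induction hab using ReflTransGen.head_induction_on with
  | refl =>
    obtain ⟨l, hl, hlast⟩ := List.exists_isChain_cons_of_relationReflTransGen hbc
    exact ⟨l, hl, by rw [List.getLast?_eq_some_getLast (by simp), hlast], List.mem_cons_self⟩
  | head hxy _ ih =>
    obtain ⟨l, hl, hlast, hb⟩ := ih
    exact ⟨_ :: l, hl.cons_cons hxy, by rwa [List.getLast?_cons_cons],
      List.mem_cons_of_mem _ hb⟩

lemma LineConnAvoid.exists_isChain {v e : V} (h : H.LineConnAvoid D v e) :
    ∃ s : List V, s ≠ [] ∧ s.IsChain H.line ∧ s.head? = some v ∧ s.getLast? = some e ∧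
      ∀ x ∈ s, x ∉ D := by
  obtain ⟨l, hl, hlast⟩ := List.exists_isChain_cons_of_relationReflTransGen h.2
  refine ⟨v :: l, by simp, hl.imp fun _ _ h => h.1, rfl,
    by rw [List.getLast?_eq_some_getLast (by simp), hlast], ?_⟩
  intro x hx
  exact List.IsChain.induction (· ∉ D) _ hl (fun _ _ hxy _ => hxy.2) (fun _ => h.1) x hx

lemma LineConnVia.exists_isChain {v e : V} (h : H.LineConnVia D v e) :
    ∃ s : List V, s ≠ [] ∧ s.IsChain H.line ∧ s.head? = some v ∧ s.getLast? = some e ∧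
      ∃ x ∈ s, x ∈ D := by
  obtain ⟨c, hcD, h1, h2⟩ := h
  obtain ⟨l, hl, hlast, hc⟩ := exists_isChain_of_lineConn h1 h2
  exact ⟨v :: l, by simp, hl, rfl, hlast, c, hc, hcD⟩

lemma LineConn.exists_lineSection {a b : V} (h : H.LineConn a b) :
    ∃ p, H.lineSection p a b := by
  induction h using ReflTransGen.head_induction_on with
  | refl => exact ⟨[b], by simp, List.isChain_singleton _, List.nodup_singleton _, rfl, rfl⟩
  | @head a c hac _ ih =>
    obtain ⟨p, hpne, hpch, hpnd, hph, hpl⟩ := ih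
    by_cases hap : a ∈ p
    · obtain ⟨s, t, rfl⟩ := List.append_of_mem hap
      refine ⟨a :: t, by simp, (List.isChain_append.1 hpch).2.1,
        hpnd.sublist (List.sublist_append_right s _), rfl, ?_⟩
      rwa [List.getLast?_append_of_ne_nil s (by simp)] at hpl
    · refine ⟨a :: p, by simp, List.isChain_cons.2 ⟨?_, hpch⟩,
        List.nodup_cons.2 ⟨hap, hpnd⟩, rfl, ?_⟩
      · intro y hy
        rw [hph, Option.mem_def, Option.some.injEq] at hy
        exact hy ▸ hac
      · simp [List.getLast?_cons, hpl]

end Lists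


section ConnectingWalks

variable (H : MixedGraph V) (D : Set V)

/-- Walks without arcs, cut into sections: a `D`-connecting walk from `v` to `j` whose first
section is entered through an arrowhead iff `d`. A section is a collider exactly when it is
entered through an arrowhead and left against a backward arrow. -/
inductive ConnSuffix (j : V) : Bool → V → Prop
  | done (d : Bool) {v : V} : H.LineConnAvoid D v j → ConnSuffix j d v
  | nonCollider {d d' : Bool} {v b v' : V} : ¬(d = true ∧ d' = false) →
      H.LineConnAvoid D v b → H.arrowAlong d' b v' → ConnSuffix j d' v' → ConnSuffix j d v
  | collider {v b v' : V} : H.LineConnVia D v b → H.arrow v' b → ConnSuffix j false v' →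
      ConnSuffix j true v

/-- An initial piece of a `D`-connecting walk from `i`, whose sections so far respect `D` and
whose last edge is the arrow `arrowAlong d` into `v`; the section of `v` is still open. -/
inductive ConnPrefix (i : V) : V → Bool → Prop
  | start {a v : V} {d : Bool} : H.LineConnAvoid D i a → H.arrowAlong d a v → ConnPrefix i v d
  | nonCollider {a b v : V} {d d' : Bool} : ConnPrefix i a d → ¬(d = true ∧ d' = false) →
      H.LineConnAvoid D a b → H.arrowAlong d' b v → ConnPrefix i v d'
  | collider {a b v : V} : ConnPrefix i a true → H.LineConnVia D a b → H.arrow v b →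
      ConnPrefix i v false

def PrefixConnect (i j : V) : Prop :=
  H.LineConnAvoid D i j ∨ ∃ v d, H.ConnPrefix D i v d ∧ H.LineConnAvoid D v j

variable {H D}

lemma ConnPrefix.connSuffix {i j v : V} {d : Bool} (h : H.ConnPrefix D i v d)
    (hs : H.ConnSuffix D j d v) : H.ConnSuffix D j false i := by
  induction h with
  | start hla hc => exact .nonCollider (by simp) hla hc hs
  | nonCollider _ hn hla hc ih => exact ih (.nonCollider hn hla hc hs)
  | collider _ hlc har ih => exact ih (.collider hlc har hs)

lemma ConnSuffix.prefixConnect {i j v : V} {d : Bool} (h : H.ConnSuffix D j d v)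
    (hv : (v = i ∧ d = false) ∨ H.ConnPrefix D i v d) : H.PrefixConnect D i j := by
  induction h with
  | done d hla =>
    rcases hv with ⟨rfl, rfl⟩ | hr
    · exact .inl hla
    · exact .inr ⟨_, _, hr, hla⟩
  | nonCollider hn hla hc _ ih =>
    rcases hv with ⟨rfl, rfl⟩ | hr
    · exact ih (.inr (.start hla hc))
    · exact ih (.inr (.nonCollider hr hn hla hc))
  | collider hlc har _ ih =>
    rcases hv with ⟨rfl, h⟩ | hr
    · exact absurd h (by simp)
    · exact ih (.inr (.collider hr hlc har))

lemma connSuffix_iff_prefixConnect {i j : V} :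
    H.ConnSuffix D j false i ↔ H.PrefixConnect D i j := by
  refine ⟨fun h => h.prefixConnect (.inl ⟨rfl, rfl⟩), ?_⟩
  rintro (h | ⟨v, d, hr, hla⟩)
  · exact .done _ h
  · exact hr.connSuffix (.done _ hla)

end ConnectingWalks

end MixedGraph

namespace Conn

def headsNext : Conn → Bool
  | fwd => true
  | bwd => false
  | biarc => true

def ofBool : Bool → Conn
  | true => fwd
  | false => bwd

lemma headsNext_iff (c : Conn) : c.headsNext = true ↔ c.headTowardsNext := by
  cases c <;> simp [headsNext, headTowardsNext]

lemma headsNext_eq_false_iff {c : Conn} (hc : c ≠ biarc) :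
    c.headsNext = false ↔ c.headTowardsPrev := by
  cases c <;> simp_all [headsNext, headTowardsPrev]

@[simp] lemma headsNext_ofBool (d : Bool) : (ofBool d).headsNext = d := by cases d <;> rfl

lemma headTowardsPrev_ofBool (d : Bool) : (ofBool d).headTowardsPrev ↔ d = false := by
  cases d <;> simp [ofBool, headTowardsPrev]

lemma connOK_ofBool {H : MixedGraph V} (d : Bool) (a b : V) :
    H.connOK (ofBool d) a b ↔ H.arrowAlong d a b := by
  cases d <;> rfl

end Conn

namespace MWalk

/-- `colliderAt`, where the first section counts as entered through an arrowhead iff `d`. -/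
def colliderAtFrom (w : MWalk V) (d : Bool) (k : ℕ) : Prop :=
  if k = 0 then d = true ∧ ∃ c, w.conns[0]? = some c ∧ c.headTowardsPrev
  else w.colliderAt k

def CConnectingFrom (w : MWalk V) (D : Set V) (d : Bool) : Prop :=
  ∀ k s, w.sections[k]? = some s →
    (w.colliderAtFrom d k → ∃ x ∈ s, x ∈ D) ∧
      (¬ w.colliderAtFrom d k → ∀ x ∈ s, x ∉ D)

variable {D : Set V}

lemma colliderAtFrom_false (w : MWalk V) (k : ℕ) :
    w.colliderAtFrom false k ↔ w.colliderAt k := by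
  unfold colliderAtFrom
  split_ifs with hk
  · simp only [false_and, false_iff]
    exact fun h => h.1.ne' hk
  · rfl

lemma cConnecting_iff_cConnectingFrom (w : MWalk V) :
    w.cConnecting D ↔ w.CConnectingFrom D false := by
  simp only [cConnecting, CConnectingFrom, colliderAtFrom_false]
  exact ⟨fun h k s hs => ⟨h.1 k s hs, h.2 k s hs⟩,
    fun h => ⟨fun k s hs => (h k s hs).1, fun k s hs => (h k s hs).2⟩⟩

section Cons

variable (f s : List V) (c : Conn) (rr : List (Conn × List V))

lemma conns_cons : (mk f ((c, s) :: rr)).conns = c :: (mk s rr).conns := rfl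

lemma colliderAtFrom_cons_zero (d : Bool) :
    (mk f ((c, s) :: rr)).colliderAtFrom d 0 ↔ (d = true ∧ c.headTowardsPrev) := by
  simp [colliderAtFrom, conns_cons]

lemma colliderAtFrom_cons_succ (d : Bool) (k : ℕ) :
    (mk f ((c, s) :: rr)).colliderAtFrom d (k + 1) ↔ (mk s rr).colliderAtFrom c.headsNext k := by
  rw [colliderAtFrom, if_neg k.succ_ne_zero, colliderAt, conns_cons]
  simp only [Nat.add_sub_cancel, List.length_cons, List.getElem?_cons_succ]
  rcases k with _ | k
  · simp only [colliderAtFrom, if_pos, List.getElem?_cons_zero, Option.some.injEq,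
      exists_eq_left', ← c.headsNext_iff]
    constructor
    · rintro ⟨-, -, h1, h2⟩
      exact ⟨h1, h2⟩
    · rintro ⟨h1, c₁, hc₁, h2⟩
      have : 0 < (mk s rr).conns.length :=
        List.length_pos_of_ne_nil (by rintro h; simp [h] at hc₁)
      exact ⟨Nat.zero_lt_one, by omega, h1, c₁, hc₁, h2⟩
  · simp only [colliderAtFrom, if_neg (Nat.succ_ne_zero k), colliderAt, Nat.add_sub_cancel]
    constructor
    · rintro ⟨-, hlen, h1, h2⟩
      exact ⟨by omega, by omega, h1, h2⟩
    · rintro ⟨-, hlen, h1, h2⟩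
      exact ⟨by omega, by omega, h1, h2⟩

lemma cConnectingFrom_cons {d : Bool} :
    (mk f ((c, s) :: rr)).CConnectingFrom D d ↔
      ((d = true ∧ c.headTowardsPrev → ∃ x ∈ f, x ∈ D) ∧
        (¬(d = true ∧ c.headTowardsPrev) → ∀ x ∈ f, x ∉ D)) ∧
      (mk s rr).CConnectingFrom D c.headsNext := by
  constructor
  · intro h
    refine ⟨?_, fun k s' hs' => ?_⟩
    · simpa only [colliderAtFrom_cons_zero] using h 0 f rfl
    · simpa only [colliderAtFrom_cons_succ] using h (k + 1) s' hs'
  · rintro ⟨h0, hrest⟩ (_ | k) s' hs'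
    · cases hs'
      simpa only [colliderAtFrom_cons_zero] using h0
    · simpa only [colliderAtFrom_cons_succ] using hrest k s' hs'

end Cons

end MWalk

namespace MixedGraph

variable {H : MixedGraph V} {D : Set V}

lemma connSuffix_of_walkAux (hna : ∀ a b, ¬ H.arc a b) {j : V} (rr : List (Conn × List V))
    {d : Bool} {f : List V} {v : V} (hch : f.IsChain H.line) (hh : f.head? = some v)
    (hrest : ∃ e, f.getLast? = some e ∧ walkAux H e rr j)
    (hf : (MWalk.mk f rr).CConnectingFrom D d) : H.ConnSuffix D j d v := by
  induction rr generalizing d f v with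
  | nil =>
    obtain ⟨e, hl, rfl⟩ := hrest
    refine .done _ (lineConnAvoid_of_isChain hch hh hl ((hf 0 f rfl).2 ?_))
    simp [MWalk.colliderAtFrom, MWalk.conns]
  | cons p rr ih =>
    obtain ⟨c, s⟩ := p
    obtain ⟨e, hl, -, hsch, ⟨b, hbh, hconn⟩, hrest⟩ := hrest
    rw [MWalk.cConnectingFrom_cons] at hf
    have hsuf := ih hsch hbh hrest hf.2
    have hcne : c ≠ .biarc := by
      rintro rfl
      exact hna e b hconn
    have hconn' : H.arrowAlong c.headsNext e b := by
      cases c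
      · exact hconn
      · exact hconn
      · exact absurd hconn (hna e b)
    by_cases hcoll : d = true ∧ c.headTowardsPrev
    · obtain ⟨x, hxf, hxD⟩ := hf.1.1 hcoll
      have hkind : c.headsNext = false := (Conn.headsNext_eq_false_iff hcne).2 hcoll.2
      rw [hkind] at hsuf hconn'
      rw [hcoll.1]
      exact .collider (lineConnVia_of_isChain hch hh hl hxf hxD) hconn' hsuf
    · refine .nonCollider ?_ (lineConnAvoid_of_isChain hch hh hl (hf.1.2 hcoll)) hconn' hsuf
      rintro ⟨hd, hk⟩
      exact hcoll ⟨hd, (Conn.headsNext_eq_false_iff hcne).1 hk⟩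

lemma ConnSuffix.exists_walk {j : V} {d : Bool} {v : V} (h : H.ConnSuffix D j d v) :
    ∃ (f : List V) (rr : List (Conn × List V)), f ≠ [] ∧ f.IsChain H.line ∧
      f.head? = some v ∧ (∃ e, f.getLast? = some e ∧ walkAux H e rr j) ∧
      (MWalk.mk f rr).CConnectingFrom D d := by
  induction h with
  | done d hla =>
    obtain ⟨s, hne, hch, hh, hl, hD⟩ := hla.exists_isChain
    refine ⟨s, [], hne, hch, hh, ⟨j, hl, rfl⟩, ?_⟩
    rintro (_ | k) s' hs'
    · cases hs'
      exact ⟨fun h => by simp [MWalk.colliderAtFrom, MWalk.conns] at h, fun _ => hD⟩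
    · simp [MWalk.sections] at hs'
  | @nonCollider d d' _ b v' hn hla hc _ ih =>
    obtain ⟨f', rr', hne', hch', hh', hrest, hf'⟩ := ih
    obtain ⟨s, hne, hch, hh, hl, hD⟩ := hla.exists_isChain
    refine ⟨s, (.ofBool d', f') :: rr', hne, hch, hh,
      ⟨b, hl, hne', hch', ⟨v', hh', (Conn.connOK_ofBool d' b v').2 hc⟩, hrest⟩, ?_⟩
    rw [MWalk.cConnectingFrom_cons, Conn.headsNext_ofBool]
    exact ⟨⟨fun ⟨hd, hprev⟩ => absurd ⟨hd, (Conn.headTowardsPrev_ofBool d').1 hprev⟩ hn,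
      fun _ => hD⟩, hf'⟩
  | @collider _ b v' hlc harr _ ih =>
    obtain ⟨f', rr', hne', hch', hh', hrest, hf'⟩ := ih
    obtain ⟨s, hne, hch, hh, hl, x, hxs, hxD⟩ := hlc.exists_isChain
    refine ⟨s, (.ofBool false, f') :: rr', hne, hch, hh,
      ⟨b, hl, hne', hch', ⟨v', hh', (Conn.connOK_ofBool false b v').2 harr⟩, hrest⟩, ?_⟩
    rw [MWalk.cConnectingFrom_cons, Conn.headsNext_ofBool]
    exact ⟨⟨fun _ => ⟨x, hxs, hxD⟩, fun hnc => absurd ⟨rfl, trivial⟩ hnc⟩, hf'⟩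

theorem cConnect_iff_prefixConnect (hna : ∀ a b, ¬ H.arc a b) (i j : V) :
    H.cConnect i j D ↔ H.PrefixConnect D i j := by
  rw [← connSuffix_iff_prefixConnect]
  constructor
  · rintro ⟨⟨f, rr⟩, ⟨-, hch, hh, hrest⟩, hconn⟩
    exact connSuffix_of_walkAux hna rr hch hh hrest
      ((MWalk.cConnecting_iff_cConnectingFrom _).1 hconn)
  · intro h
    obtain ⟨f, rr, hne, hch, hh, hrest, hf⟩ := h.exists_walk
    exact ⟨⟨f, rr⟩, ⟨hne, hch, hh, hrest⟩,
      (MWalk.cConnecting_iff_cConnectingFrom _).2 hf⟩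

section ChainGraphs

variable {G : MixedGraph V} {C : Set V}

/-- The set `S = C ∪ ant(C)` of the conditioning algorithm. -/
def antClosure (G : MixedGraph V) (C : Set V) : Set V := C ∪ G.antSet C

lemma mem_antClosure_of_sdStep {x y : V} (h : G.sdStep x y) (hy : y ∈ G.antClosure C) :
    x ∈ G.antClosure C := by
  by_cases hxC : x ∈ C
  · exact .inl hxC
  by_cases hxy : x = y
  · exact hxy ▸ hy
  rcases hy with hyC | ⟨hyU, -⟩
  · exact .inr ⟨Set.mem_biUnion hyC ⟨hxy, .single h⟩, hxC⟩
  · obtain ⟨c, hcC, hyc, htg⟩ := Set.mem_iUnion₂.1 hyU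
    by_cases hxc : x = c
    · exact .inl (hxc ▸ hcC)
    · exact .inr ⟨Set.mem_biUnion hcC ⟨hxc, .head h htg⟩, hxC⟩

lemma mem_antClosure_of_arrow {a b : V} (h : G.arrow a b) (hb : b ∈ G.antClosure C) :
    a ∈ G.antClosure C :=
  mem_antClosure_of_sdStep (.inr h) hb

lemma exists_sdWalk_of_mem_antClosure {m : V} (hm : m ∈ G.antClosure C) :
    ∃ c ∈ C, ReflTransGen G.sdStep m c := by
  rcases hm with hmC | ⟨hU, -⟩
  · exact ⟨m, hmC, .refl⟩
  · obtain ⟨c, hcC, -, htg⟩ := Set.mem_iUnion₂.1 hU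
    exact ⟨c, hcC, htg.to_reflTransGen⟩

namespace IsCG

lemma line_symm (hG : G.IsCG) {a b : V} (h : G.line a b) : G.line b a := hG.1.1.1 a b h

lemma line_irrefl (hG : G.IsCG) (a : V) : ¬ G.line a a := hG.1.1.2.1 a

lemma arrow_irrefl (hG : G.IsCG) (a : V) : ¬ G.arrow a a := hG.1.1.2.2.1 a

lemma line_nodes (hG : G.IsCG) {a b : V} (h : G.line a b) : a ∈ G.nodes ∧ b ∈ G.nodes :=
  hG.1.1.2.2.2.2.2.1 a b h

lemma arrow_nodes (hG : G.IsCG) {a b : V} (h : G.arrow a b) : a ∈ G.nodes ∧ b ∈ G.nodes :=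
  hG.1.1.2.2.2.2.2.2.1 a b h

lemma lineConn_symm (hG : G.IsCG) {a b : V} (h : G.LineConn a b) : G.LineConn b a :=
  ReflTransGen.mono (fun _ _ => hG.line_symm) _ _ h.swap

lemma mem_antClosure_iff_of_line (hG : G.IsCG) {a b : V} (h : G.line a b) :
    a ∈ G.antClosure C ↔ b ∈ G.antClosure C :=
  ⟨mem_antClosure_of_sdStep (.inl (hG.line_symm h)), mem_antClosure_of_sdStep (.inl h)⟩

lemma mem_antClosure_iff_of_lineConn (hG : G.IsCG) {a b : V} (h : G.LineConn a b) :
    a ∈ G.antClosure C ↔ b ∈ G.antClosure C := by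
  induction h with
  | refl => rfl
  | tail _ hl ih => exact ih.trans (hG.mem_antClosure_iff_of_line hl)

lemma not_lineConn_of_arrow (hG : G.IsCG) {a b : V} (hab : G.arrow a b) : ¬ G.LineConn b a :=
  fun h => hG.1.2 a b hab (ReflTransGen.mono (fun _ _ => .inl) _ _ h)

end IsCG

end ChainGraphs

section Conditioning

variable {G : MixedGraph V} {C : Set V}

/-- The lines `x — y` added in step 3 for a collider trislide `x → a — ⋯ — b ← y` inside
`S`: in a chain graph these are the only edges steps 2 and 3 add. -/
def condNewLine (G : MixedGraph V) (S : Set V) (x y : V) : Prop :=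
  ∃ a b p, G.arrow x a ∧ G.lineSection p a b ∧ (∀ z ∈ p, z ∈ S) ∧ G.arrow y b ∧
    x ∉ p ∧ y ∉ p ∧ x ≠ y

lemma condNewLine.ne {S : Set V} {x y : V} (h : G.condNewLine S x y) : x ≠ y :=
  let ⟨_, _, _, _, _, _, _, _, _, hxy⟩ := h
  hxy

lemma condNewLine.mem_antClosure {x y : V} (h : G.condNewLine (G.antClosure C) x y) :
    x ∈ G.antClosure C ∧ y ∈ G.antClosure C := by
  obtain ⟨a, b, p, hxa, ⟨-, -, -, hh, hl⟩, hS, hyb, -⟩ := h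
  exact ⟨mem_antClosure_of_arrow hxa (hS a (List.mem_of_mem_head? hh)),
    mem_antClosure_of_arrow hyb (hS b (List.mem_of_mem_getLast? hl))⟩

namespace IsCG

variable {S : Set V}

lemma condStep2_arrow (hG : G.IsCG) {a b : V} : (G.condStep2 S).arrow a b ↔ G.arrow a b :=
  ⟨fun h => h.elim id fun ⟨_, _, _, _, harc, _⟩ => absurd harc (hG.2 _ _), .inl⟩

lemma not_condStep2_arc (hG : G.IsCG) (a b : V) : ¬ (G.condStep2 S).arc a b := by
  rintro (h | ⟨_, _, _, _, h, _⟩ | ⟨_, _, _, _, h, _⟩) <;> exact hG.2 _ _ h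

lemma not_condCl_bi (hG : G.IsCG) {x y : V} : ¬ CondCl (G.condStep2 S) S .bi x y := by
  intro h
  generalize hk : EKind.bi = k at h
  induction h with
  | base_bi hb => exact hG.not_condStep2_arc _ _ hb
  | symm_bi _ ih => exact ih rfl
  | rBL _ _ _ _ _ _ _ ih => exact ih rfl
  | rBB _ _ _ _ _ _ _ ih => exact ih rfl
  | _ => cases hk

lemma condCl_ar_iff (hG : G.IsCG) {x y : V} : CondCl (G.condStep2 S) S .ar x y ↔ G.arrow x y := by
  refine ⟨fun h => ?_, fun h => .base_ar ((hG.condStep2_arrow).2 h)⟩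
  generalize hk : EKind.ar = k at h
  induction h with
  | base_ar h => exact (hG.condStep2_arrow).1 h
  | rBL _ _ _ _ _ hbi => exact absurd hbi hG.not_condCl_bi
  | _ => cases hk

lemma condCl_ln_iff (hG : G.IsCG) {x y : V} :
    CondCl (G.condStep2 S) S .ln x y ↔
      G.line x y ∨ G.condNewLine S x y ∨ G.condNewLine S y x := by
  constructor
  · intro h
    generalize hk : EKind.ln = k at h
    induction h with
    | base_ln h => exact .inl h
    | symm_ln _ ih =>
      rcases ih rfl with h | h | h
      · exact .inl (hG.line_symm h)
      · exact .inr (.inr h)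
      · exact .inr (.inl h)
    | rLL hls hS hne hi hj h1 h2 =>
      exact .inr (.inl ⟨_, _, _, (hG.condCl_ar_iff).1 h1, hls, hS, (hG.condCl_ar_iff).1 h2,
        hi, hj, hne⟩)
    | _ => cases hk
  · rintro (h | ⟨a, b, p, h1, hls, hS, h2, hx, hy, hne⟩ |
      ⟨a, b, p, h1, hls, hS, h2, hx, hy, hne⟩)
    · exact .base_ln h
    · exact .rLL hls hS hne hx hy (.base_ar ((hG.condStep2_arrow).2 h1))
        (.base_ar ((hG.condStep2_arrow).2 h2))
    · exact .symm_ln (.rLL hls hS hne hx hy (.base_ar ((hG.condStep2_arrow).2 h1))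
        (.base_ar ((hG.condStep2_arrow).2 h2)))

lemma alphaCond_arc (hG : G.IsCG) (a b : V) : ¬ (G.alphaCond C).arc a b :=
  fun h => hG.not_condCl_bi h.1.1

lemma alphaCond_arrow (hG : G.IsCG) {a b : V} :
    (G.alphaCond C).arrow a b ↔
      (G.arrow a b ∧ b ∉ G.antClosure C) ∧ a ∉ C ∧ b ∉ C := by
  refine ⟨fun ⟨h, haC, hbC⟩ => ⟨?_, haC, hbC⟩, fun ⟨⟨h, hb⟩, haC, hbC⟩ =>
    ⟨.inl ⟨(hG.condCl_ar_iff).2 h, hb⟩, haC, hbC⟩⟩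
  rcases h with ⟨h, hb⟩ | ⟨hbi, -⟩
  · exact ⟨(hG.condCl_ar_iff).1 h, hb⟩
  · exact absurd hbi hG.not_condCl_bi

lemma alphaCond_line (hG : G.IsCG) {a b : V} :
    (G.alphaCond C).line a b ↔
      (G.line a b ∨ G.condNewLine (G.antClosure C) a b ∨ G.condNewLine (G.antClosure C) b a ∨
        (G.arrow a b ∧ b ∈ G.antClosure C) ∨ (G.arrow b a ∧ a ∈ G.antClosure C)) ∧
      a ∉ C ∧ b ∉ C := by
  refine and_congr_left fun _ => ?_
  simp only [removeHeads, condCore, hG.condCl_ln_iff, hG.condCl_ar_iff,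
    iff_false_intro hG.not_condCl_bi, false_and, or_false, or_assoc]
  rfl

end IsCG

end Conditioning

namespace IsCG

variable {G : MixedGraph V} {C : Set V}

lemma alphaCond_line_symm (hG : G.IsCG) {a b : V} (h : (G.alphaCond C).line a b) :
    (G.alphaCond C).line b a := by
  rw [hG.alphaCond_line] at h ⊢
  obtain ⟨h | h | h | h | h, ha, hb⟩ := h
  · exact ⟨.inl (hG.line_symm h), hb, ha⟩
  · exact ⟨.inr (.inr (.inl h)), hb, ha⟩
  · exact ⟨.inr (.inl h), hb, ha⟩
  · exact ⟨.inr (.inr (.inr (.inr h))), hb, ha⟩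
  · exact ⟨.inr (.inr (.inr (.inl h))), hb, ha⟩

lemma line_of_alphaCond_line (hG : G.IsCG) {a b : V} (ha : a ∉ G.antClosure C)
    (h : (G.alphaCond C).line a b) : G.line a b ∧ b ∉ G.antClosure C := by
  obtain ⟨h | h | h | ⟨h, hb⟩ | ⟨-, ha'⟩, -, -⟩ := hG.alphaCond_line.1 h
  · exact ⟨h, fun hb => ha ((hG.mem_antClosure_iff_of_line h).2 hb)⟩
  · exact absurd h.mem_antClosure.1 ha
  · exact absurd h.mem_antClosure.2 ha
  · exact absurd (mem_antClosure_of_arrow h hb) ha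
  · exact absurd ha' ha

lemma alphaCond_line_nodes (hG : G.IsCG) {a b : V} (h : (G.alphaCond C).line a b) :
    a ∈ (G.alphaCond C).nodes ∧ b ∈ (G.alphaCond C).nodes := by
  obtain ⟨h, haC, hbC⟩ := hG.alphaCond_line.1 h
  suffices a ∈ G.nodes ∧ b ∈ G.nodes from ⟨⟨this.1, haC⟩, this.2, hbC⟩
  rcases h with h | ⟨_, _, _, hx, -, -, hy, -⟩ | ⟨_, _, _, hx, -, -, hy, -⟩ | ⟨h, -⟩ |
    ⟨h, -⟩
  · exact hG.line_nodes h
  · exact ⟨(hG.arrow_nodes hx).1, (hG.arrow_nodes hy).1⟩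
  · exact ⟨(hG.arrow_nodes hy).1, (hG.arrow_nodes hx).1⟩
  · exact hG.arrow_nodes h
  · exact (hG.arrow_nodes h).symm

lemma alphaCond_isMixedGraph (hG : G.IsCG) : (G.alphaCond C).IsMixedGraph := by
  refine ⟨fun _ _ => hG.alphaCond_line_symm, fun a h => ?_, fun a h => ?_,
    fun a b h => absurd h (hG.alphaCond_arc a b), fun a => hG.alphaCond_arc a a,
    fun _ _ => hG.alphaCond_line_nodes, fun a b h => ?_,
    fun a b h => absurd h (hG.alphaCond_arc a b)⟩
  · obtain ⟨h | h | h | ⟨h, -⟩ | ⟨h, -⟩, -, -⟩ := hG.alphaCond_line.1 h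
    · exact hG.line_irrefl a h
    · exact h.ne rfl
    · exact h.ne rfl
    · exact hG.arrow_irrefl a h
    · exact hG.arrow_irrefl a h
  · exact hG.arrow_irrefl a (hG.alphaCond_arrow.1 h).1.1
  · obtain ⟨⟨h, -⟩, haC, hbC⟩ := hG.alphaCond_arrow.1 h
    exact ⟨⟨(hG.arrow_nodes h).1, haC⟩, (hG.arrow_nodes h).2, hbC⟩

lemma reflTransGen_sdStep_of_alphaCond (hG : G.IsCG) {x y : V}
    (h : ReflTransGen (G.alphaCond C).sdStep x y) (hx : x ∉ G.antClosure C) :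
    ReflTransGen G.sdStep x y ∧ y ∉ G.antClosure C := by
  induction h with
  | refl => exact ⟨.refl, hx⟩
  | tail _ hyz ih =>
    obtain ⟨hxy, hy⟩ := ih
    rcases hyz with hyz | hyz
    · obtain ⟨hyz, hz⟩ := hG.line_of_alphaCond_line hy hyz
      exact ⟨hxy.tail (.inl hyz), hz⟩
    · obtain ⟨⟨hyz, hz⟩, -, -⟩ := hG.alphaCond_arrow.1 hyz
      exact ⟨hxy.tail (.inr hyz), hz⟩

lemma alphaCond_noArrowSemiDirectedCycle (hG : G.IsCG) :
    (G.alphaCond C).NoArrowSemiDirectedCycle := by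
  intro a b hab hba
  obtain ⟨⟨hab, hb⟩, -, -⟩ := hG.alphaCond_arrow.1 hab
  exact hG.1.2 a b hab (hG.reflTransGen_sdStep_of_alphaCond hba hb).1

lemma alphaCond (hG : G.IsCG) : (G.alphaCond C).IsCG :=
  ⟨⟨hG.alphaCond_isMixedGraph, hG.alphaCond_noArrowSemiDirectedCycle⟩, hG.alphaCond_arc⟩

end IsCG

section OpenSections

variable {H : MixedGraph V} {D : Set V} {i : V}

/-- The walk from `i` has reached `x` inside a section that avoids `D` so far and was not entered
through an arrowhead, so it is not a collider however the walk leaves it. -/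
def OpenPrefix (H : MixedGraph V) (D : Set V) (i x : V) : Prop :=
  H.LineConnAvoid D i x ∨ ∃ m, H.ConnPrefix D i m false ∧ H.LineConnAvoid D m x

namespace OpenPrefix

lemma notMem {x : V} (h : H.OpenPrefix D i x) : x ∉ D := by
  rcases h with h | ⟨_, -, h⟩ <;> exact h.notMem_right

lemma extend {x y : V} (h : H.OpenPrefix D i x) (hxy : H.LineConnAvoid D x y) :
    H.OpenPrefix D i y := by
  rcases h with h | ⟨m, hr, hla⟩
  · exact .inl (h.trans hxy)
  · exact .inr ⟨m, hr, hla.trans hxy⟩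

lemma tail {x y : V} (h : H.OpenPrefix D i x) (hxy : H.line x y) (hy : y ∉ D) :
    H.OpenPrefix D i y :=
  h.extend ((LineConnAvoid.refl h.notMem).tail hxy hy)

lemma connPrefix {x v : V} {d : Bool} (h : H.OpenPrefix D i x) (hc : H.arrowAlong d x v) :
    H.ConnPrefix D i v d := by
  rcases h with h | ⟨m, hr, hla⟩
  · exact .start h hc
  · exact .nonCollider hr (by simp) hla hc

lemma prefixConnect {x j : V} (h : H.OpenPrefix D i x) (hxj : H.LineConnAvoid D x j) :
    H.PrefixConnect D i j := by
  rcases h.extend hxj with h | ⟨m, hr, hla⟩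
  · exact .inl h
  · exact .inr ⟨m, false, hr, hla⟩

end OpenPrefix

lemma ConnPrefix.openPrefix {v : V} (h : H.ConnPrefix D i v false) (hv : v ∉ D) :
    H.OpenPrefix D i v :=
  .inr ⟨v, h, .refl hv⟩

lemma ConnPrefix.exists_arrow {v : V} {d : Bool} (h : H.ConnPrefix D i v d) :
    ∃ u, H.arrow u v ∨ H.arrow v u := by
  cases h with
  | collider _ _ hc => exact ⟨_, .inr hc⟩
  | start _ hc | nonCollider _ _ _ hc =>
    cases d
    · exact ⟨_, .inr hc⟩
    · exact ⟨_, .inl hc⟩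

end OpenSections

section Detour

variable {G : MixedGraph V} {D : Set V} {i : V}

/-- An open section entered through an arrowhead at `m₀` and left against an arrow `w → x`
is a collider. If it misses `D`, reroute the walk along a semi-directed path from the section
towards `c ∈ D` and back along the same path; the section turned at contains `c`. -/
lemma IsCG.connPrefix_detour (hG : G.IsCG) {m c : V} (hmc : ReflTransGen G.sdStep m c)
    (hc : c ∈ D) {x w m₀ : V} (hmx : G.LineConn m x) (hwx : G.arrow w x)
    (hr : G.ConnPrefix D i m₀ true) (hm₀ : G.LineConn m₀ m) : G.ConnPrefix D i w false := by
  induction hmc using ReflTransGen.head_induction_on generalizing x w m₀ with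
  | refl => exact .collider hr ⟨c, hc, hm₀, hmx⟩ hwx
  | @head m n hmn _ ih =>
    rcases hmn with hmn | hmn
    · exact ih ((ReflTransGen.single (hG.line_symm hmn)).trans hmx) hwx hr (hm₀.tail hmn)
    · by_cases hmeet : ∃ c' ∈ D, G.LineConn m₀ c'
      · obtain ⟨c', hc', hm₀c'⟩ := hmeet
        exact .collider hr
          ⟨c', hc', hm₀c', ((hG.lineConn_symm hm₀c').trans hm₀).trans hmx⟩ hwx
      · have hrn : G.ConnPrefix D i n true :=
          .nonCollider hr (by simp) (hm₀.lineConnAvoid fun z hz hzD => hmeet ⟨z, hzD, hz⟩) hmn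
        have hrm : G.ConnPrefix D i m false := ih .refl hmn hrn .refl
        exact .nonCollider hrm (by simp)
          (hmx.lineConnAvoid fun z hz hzD => hmeet ⟨z, hzD, hm₀.trans hz⟩) hwx

lemma IsCG.connPrefix_detour_of_mem_antClosure (hG : G.IsCG) {C : Set V} (hCD : C ⊆ D)
    {m x w : V} (hm : m ∈ G.antClosure C) (hr : G.ConnPrefix D i m true) (hmx : G.LineConn m x)
    (hwx : G.arrow w x) : G.ConnPrefix D i w false :=
  let ⟨_, hc, hmc⟩ := exists_sdWalk_of_mem_antClosure hm
  hG.connPrefix_detour hmc (hCD hc) hmx hwx hr .refl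

end Detour

section Forward

variable {G : MixedGraph V} {C C₁ : Set V} {i : V}

def ClosablePrefix (G : MixedGraph V) (C C₁ : Set V) (i x : V) : Prop :=
  G.OpenPrefix (C ∪ C₁) i x ∨
    ∃ m ∈ G.antClosure C,
      G.ConnPrefix (C ∪ C₁) i m true ∧ G.LineConnAvoid (C ∪ C₁) m x

namespace ClosablePrefix

lemma notMem {x : V} (h : G.ClosablePrefix C C₁ i x) : x ∉ C ∪ C₁ := by
  rcases h with h | ⟨_, -, -, h⟩
  · exact h.notMem
  · exact h.notMem_right

lemma tail {x y : V} (h : G.ClosablePrefix C C₁ i x) (hxy : G.line x y) (hy : y ∉ C ∪ C₁) :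
    G.ClosablePrefix C C₁ i y := by
  rcases h with h | ⟨m, hm, hr, hla⟩
  · exact .inl (h.tail hxy hy)
  · exact .inr ⟨m, hm, hr, hla.tail hxy hy⟩

lemma connPrefix_true {x v : V} (h : G.ClosablePrefix C C₁ i x) (hxv : G.arrow x v) :
    G.ConnPrefix (C ∪ C₁) i v true := by
  rcases h with h | ⟨m, -, hr, hla⟩
  · exact h.connPrefix hxv
  · exact .nonCollider hr (by simp) hla hxv

/-- The only place where `S = C ∪ ant(C)` matters: a section entered through an arrowhead
at a node of `S` can be closed as a collider by a detour to `C`. -/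
lemma connPrefix_false (hG : G.IsCG) {x v : V} (h : G.ClosablePrefix C C₁ i x)
    (hvx : G.arrow v x) : G.ConnPrefix (C ∪ C₁) i v false := by
  rcases h with h | ⟨m, hm, hr, hla⟩
  · exact h.connPrefix hvx
  · exact hG.connPrefix_detour_of_mem_antClosure Set.subset_union_left hm hr hla.lineConn hvx

lemma prefixConnect {x j : V} (h : G.ClosablePrefix C C₁ i x)
    (hxj : G.LineConnAvoid (C ∪ C₁) x j) : G.PrefixConnect (C ∪ C₁) i j := by
  rcases h with h | ⟨m, -, hr, hla⟩
  · exact h.prefixConnect hxj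
  · exact .inr ⟨m, true, hr, hla.trans hxj⟩

end ClosablePrefix

lemma IsCG.closablePrefix_of_alphaCond_line (hG : G.IsCG) {x y : V}
    (hx : x ∈ G.antClosure C) (hq : G.ClosablePrefix C C₁ i x) (hxy : (G.alphaCond C).line x y)
    (hy : y ∉ C₁) : G.ClosablePrefix C C₁ i y ∧ y ∈ G.antClosure C := by
  obtain ⟨hxy, -, hyC⟩ := hG.alphaCond_line.1 hxy
  have hyD : y ∉ C ∪ C₁ := fun h => h.elim hyC hy
  rcases hxy with hxy | ⟨a, b, p, hxa, hp, hpS, hyb, -⟩ | ⟨a, b, p, hya, hp, hpS, hxb, -⟩ |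
    ⟨hxy, hyS⟩ | ⟨hyx, -⟩
  · have hyS := (hG.mem_antClosure_iff_of_line hxy).1 hx
    exact ⟨hq.tail hxy hyD, hyS⟩
  · have hb := hpS b (List.mem_of_mem_getLast? hp.2.2.2.2)
    have hr := hG.connPrefix_detour_of_mem_antClosure Set.subset_union_left
      (hpS a (List.mem_of_mem_head? hp.2.2.2.1)) (hq.connPrefix_true hxa)
      (lineConn_of_lineSection hp) hyb
    exact ⟨.inl (hr.openPrefix hyD), mem_antClosure_of_arrow hyb hb⟩
  · have ha := hpS a (List.mem_of_mem_head? hp.2.2.2.1)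
    have hr := hG.connPrefix_detour_of_mem_antClosure Set.subset_union_left
      (hpS b (List.mem_of_mem_getLast? hp.2.2.2.2)) (hq.connPrefix_true hxb)
      (hG.lineConn_symm (lineConn_of_lineSection hp)) hya
    exact ⟨.inl (hr.openPrefix hyD), mem_antClosure_of_arrow hya ha⟩
  · exact ⟨.inr ⟨y, hyS, hq.connPrefix_true hxy, .refl hyD⟩, hyS⟩
  · exact ⟨.inl ((hq.connPrefix_false hG hyx).openPrefix hyD), mem_antClosure_of_arrow hyx hx⟩

lemma IsCG.closablePrefix_of_alphaCond_lineConnAvoid (hG : G.IsCG) {a b : V}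
    (ha : a ∈ G.antClosure C) (hq : G.ClosablePrefix C C₁ i a)
    (hab : (G.alphaCond C).LineConnAvoid C₁ a b) :
    G.ClosablePrefix C C₁ i b ∧ b ∈ G.antClosure C := by
  obtain ⟨-, hab⟩ := hab
  induction hab with
  | refl => exact ⟨hq, ha⟩
  | tail _ hxy ih => exact hG.closablePrefix_of_alphaCond_line ih.2 ih.1 hxy.1 hxy.2

lemma IsCG.lineConn_of_alphaCond (hG : G.IsCG) {a b : V} (ha : a ∉ G.antClosure C)
    (hab : (G.alphaCond C).LineConn a b) : G.LineConn a b ∧ b ∉ G.antClosure C := by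
  induction hab with
  | refl => exact ⟨.refl, ha⟩
  | tail _ hxy ih =>
    obtain ⟨hxy, hy⟩ := hG.line_of_alphaCond_line ih.2 hxy
    exact ⟨ih.1.tail hxy, hy⟩

lemma IsCG.lineConnAvoid_of_alphaCond (hG : G.IsCG) {a b : V} (ha : a ∉ G.antClosure C)
    (hab : (G.alphaCond C).LineConnAvoid C₁ a b) :
    G.LineConnAvoid (C ∪ C₁) a b ∧ b ∉ G.antClosure C := by
  obtain ⟨haC₁, hab⟩ := hab
  induction hab with
  | refl => exact ⟨.refl fun h => h.elim (fun h => ha (.inl h)) haC₁, ha⟩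
  | tail _ hxy ih =>
    obtain ⟨hline, hy⟩ := hG.line_of_alphaCond_line ih.2 hxy.1
    exact ⟨ih.1.tail hline fun h => h.elim (fun h => hy (.inl h)) hxy.2, hy⟩

lemma IsCG.arrowAlong_of_alphaCond (hG : G.IsCG) {d : Bool} {a b : V}
    (h : (G.alphaCond C).arrowAlong d a b) : G.arrowAlong d a b := by
  cases d
  · exact (hG.alphaCond_arrow.1 h).1.1
  · exact (hG.alphaCond_arrow.1 h).1.1

lemma IsCG.notMem_of_alphaCond_connPrefix (hG : G.IsCG) {v : V} {d : Bool}
    (h : (G.alphaCond C).ConnPrefix C₁ i v d) : v ∉ C := by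
  obtain ⟨u, h | h⟩ := h.exists_arrow
  · exact (hG.alphaCond_arrow.1 h).2.2
  · exact (hG.alphaCond_arrow.1 h).2.1

lemma IsCG.notMem_antClosure_of_alphaCond_connPrefix (hG : G.IsCG) {v : V}
    (h : (G.alphaCond C).ConnPrefix C₁ i v true) : v ∉ G.antClosure C := by
  cases h with
  | start _ hc | nonCollider _ _ _ hc => exact (hG.alphaCond_arrow.1 hc).1.2

/-- A walk of `α(G; ∅, C)` leaves a section inside `S` only forwards, since arrowheads at `S`
have been removed. -/
lemma IsCG.connPrefix_of_alphaCond_section (hG : G.IsCG) {a b v : V} {d : Bool}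
    (ha : a ∈ G.antClosure C) (hq : G.ClosablePrefix C C₁ i a)
    (hab : (G.alphaCond C).LineConnAvoid C₁ a b) (hbv : (G.alphaCond C).arrowAlong d b v) :
    G.ConnPrefix (C ∪ C₁) i v d := by
  obtain ⟨hq, hb⟩ := hG.closablePrefix_of_alphaCond_lineConnAvoid ha hq hab
  cases d
  · exact absurd hb (hG.alphaCond_arrow.1 hbv).1.2
  · exact hq.connPrefix_true (hG.arrowAlong_of_alphaCond hbv)

lemma IsCG.connPrefix_of_alphaCond (hG : G.IsCG) (hi : i ∉ C ∪ C₁) {v : V} {d : Bool}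
    (h : (G.alphaCond C).ConnPrefix C₁ i v d) : G.ConnPrefix (C ∪ C₁) i v d := by
  induction h with
  | start hia hav =>
    by_cases hiS : i ∈ G.antClosure C
    · exact hG.connPrefix_of_alphaCond_section hiS (.inl (.inl (.refl hi))) hia hav
    · exact .start (hG.lineConnAvoid_of_alphaCond hiS hia).1 (hG.arrowAlong_of_alphaCond hav)
  | @nonCollider a b v d d' hr hn hab hbv ih =>
    by_cases haS : a ∈ G.antClosure C
    · cases d
      · have haD : a ∉ C ∪ C₁ := fun h => h.elim (hG.notMem_of_alphaCond_connPrefix hr) hab.1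
        exact hG.connPrefix_of_alphaCond_section haS (.inl (ih.openPrefix haD)) hab hbv
      · exact absurd haS (hG.notMem_antClosure_of_alphaCond_connPrefix hr)
    · exact .nonCollider ih hn (hG.lineConnAvoid_of_alphaCond haS hab).1
        (hG.arrowAlong_of_alphaCond hbv)
  | collider hr hab hvb ih =>
    have haS := hG.notMem_antClosure_of_alphaCond_connPrefix hr
    obtain ⟨c, hc, hac, hcb⟩ := hab
    obtain ⟨hac, hcS⟩ := hG.lineConn_of_alphaCond haS hac
    exact .collider ih ⟨c, .inr hc, hac, (hG.lineConn_of_alphaCond hcS hcb).1⟩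
      (hG.alphaCond_arrow.1 hvb).1.1

lemma IsCG.prefixConnect_of_alphaCond (hG : G.IsCG) (hi : i ∉ C ∪ C₁) {j : V}
    (h : (G.alphaCond C).PrefixConnect C₁ i j) : G.PrefixConnect (C ∪ C₁) i j := by
  have of_section : ∀ {a}, a ∈ G.antClosure C → G.ClosablePrefix C C₁ i a →
      (G.alphaCond C).LineConnAvoid C₁ a j → G.PrefixConnect (C ∪ C₁) i j :=
    fun ha hq haj =>
      let hj := (hG.closablePrefix_of_alphaCond_lineConnAvoid ha hq haj).1
      hj.prefixConnect (.refl hj.notMem)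
  rcases h with hij | ⟨v, d, hr, hvj⟩
  · by_cases hiS : i ∈ G.antClosure C
    · exact of_section hiS (.inl (.inl (.refl hi))) hij
    · exact .inl (hG.lineConnAvoid_of_alphaCond hiS hij).1
  · have hrG := hG.connPrefix_of_alphaCond hi hr
    by_cases hvS : v ∈ G.antClosure C
    · cases d
      · have hvD : v ∉ C ∪ C₁ := fun h => h.elim (hG.notMem_of_alphaCond_connPrefix hr) hvj.1
        exact of_section hvS (.inl (hrG.openPrefix hvD)) hvj
      · exact absurd hvS (hG.notMem_antClosure_of_alphaCond_connPrefix hr)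
    · exact .inr ⟨v, d, hrG, (hG.lineConnAvoid_of_alphaCond hvS hvj).1⟩

end Forward

section Backward

variable {G : MixedGraph V} {C C₁ : Set V} {i : V}

lemma IsCG.lineConnAvoid_alphaCond (hG : G.IsCG) {a b : V}
    (hab : G.LineConnAvoid (C ∪ C₁) a b) : (G.alphaCond C).LineConnAvoid C₁ a b := by
  obtain ⟨ha, hab⟩ := hab
  refine ⟨fun h => ha (.inr h), ?_⟩
  induction hab with
  | refl => exact .refl
  | @tail x y hax hxy ih =>
    have hx : x ∉ C ∪ C₁ := LineConnAvoid.notMem_right ⟨ha, hax⟩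
    exact ih.tail ⟨hG.alphaCond_line.2
      ⟨.inl hxy.1, fun h => hx (.inl h), fun h => hxy.2 (.inl h)⟩, fun h => hxy.2 (.inr h)⟩

lemma IsCG.lineConn_alphaCond (hG : G.IsCG) {a b : V} (ha : a ∉ G.antClosure C)
    (hab : G.LineConn a b) : (G.alphaCond C).LineConn a b ∧ b ∉ G.antClosure C := by
  induction hab with
  | refl => exact ⟨.refl, ha⟩
  | tail _ hxy ih =>
    have hy := mt (hG.mem_antClosure_iff_of_line hxy).2 ih.2
    exact ⟨ih.1.tail (hG.alphaCond_line.2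
      ⟨.inl hxy, fun h => ih.2 (.inl h), fun h => hy (.inl h)⟩), hy⟩

lemma IsCG.alphaCond_line_of_collider (hG : G.IsCG) {u v a b : V} (hua : G.arrow u a)
    (ha : a ∈ G.antClosure C) (hab : G.LineConn a b) (hvb : G.arrow v b) (huv : u ≠ v)
    (hu : u ∉ C) (hv : v ∉ C) : (G.alphaCond C).line u v := by
  obtain ⟨p, hp⟩ := hab.exists_lineSection
  have hmem : ∀ x ∈ p, G.LineConn a x ∧ G.LineConn x b :=
    fun x hx => lineConn_of_mem hp.2.1 hp.2.2.2.1 hp.2.2.2.2 hx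
  refine hG.alphaCond_line.2 ⟨.inr (.inl ⟨a, b, p, hua, hp, fun z hz => ?_, hvb, fun hup => ?_,
    fun hvp => ?_, huv⟩), hu, hv⟩
  · exact (hG.mem_antClosure_iff_of_lineConn (hmem z hz).1).1 ha
  · exact hG.not_lineConn_of_arrow hua (hmem u hup).1
  · exact hG.not_lineConn_of_arrow hvb (hG.lineConn_symm (hmem v hvp).2)

/-- How a walk of `G` from `i`, arriving at `v` by the arrow `arrowAlong d`, is followed in
`α(G; ∅, C)`: unchanged outside `S`; inside `S`, where arrowheads have become lines, as an open
section, kept open at the tail `u` of the arrow `u → v` into `S` so that a later collider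
`u → v — ⋯ — ◦ ← w` can be bypassed by the new line `u — w`. -/
def BackwardImage (G : MixedGraph V) (C C₁ : Set V) (i v : V) (d : Bool) : Prop :=
  (v ∉ G.antClosure C → (G.alphaCond C).ConnPrefix C₁ i v d) ∧
  (v ∈ G.antClosure C → d = true → ∃ u ∈ G.antClosure C, u ∉ C ∧
    (G.alphaCond C).OpenPrefix C₁ i u ∧ G.arrow u v) ∧
  (v ∈ G.antClosure C → d = false → v ∉ C ∪ C₁ → (G.alphaCond C).OpenPrefix C₁ i v)

lemma BackwardImage.openPrefix (hG : G.IsCG) {v : V} {d : Bool}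
    (h : G.BackwardImage C C₁ i v d) (hv : v ∈ G.antClosure C) (hvD : v ∉ C ∪ C₁) :
    (G.alphaCond C).OpenPrefix C₁ i v := by
  cases d
  · exact h.2.2 hv rfl hvD
  · obtain ⟨u, huS, huC, hq, huv⟩ := h.2.1 hv rfl
    exact hq.tail (hG.alphaCond_line.2 ⟨.inr (.inr (.inr (.inl ⟨huv, hv⟩))), huC,
      fun h => hvD (.inl h)⟩) fun h => hvD (.inr h)

lemma IsCG.backwardImage_of_openPrefix (hG : G.IsCG) {b v : V} {d : Bool}
    (hb : b ∈ G.antClosure C) (hbC : b ∉ C) (hq : (G.alphaCond C).OpenPrefix C₁ i b)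
    (hbv : G.arrowAlong d b v) : G.BackwardImage C C₁ i v d := by
  cases d
  · have hv := mem_antClosure_of_arrow hbv hb
    refine ⟨fun h => absurd hv h, fun _ h => absurd h (by simp), fun _ _ hvD => ?_⟩
    exact hq.tail (hG.alphaCond_line.2 ⟨.inr (.inr (.inr (.inr ⟨hbv, hb⟩))), hbC,
      fun h => hvD (.inl h)⟩) fun h => hvD (.inr h)
  · by_cases hv : v ∈ G.antClosure C
    · exact ⟨fun h => absurd hv h, fun _ _ => ⟨b, hb, hbC, hq, hbv⟩,
        fun _ h => absurd h (by simp)⟩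
    · exact ⟨fun _ => hq.connPrefix
          (hG.alphaCond_arrow.2 ⟨⟨hbv, hv⟩, hbC, fun h => hv (.inl h)⟩),
        fun h => absurd h hv, fun h => absurd h hv⟩

lemma IsCG.backwardImage_of_notMem (hG : G.IsCG) {b v : V} {d : Bool}
    (hb : b ∉ G.antClosure C) (hbv : G.arrowAlong d b v)
    (hr : (G.alphaCond C).arrowAlong d b v → (G.alphaCond C).ConnPrefix C₁ i v d) :
    G.BackwardImage C C₁ i v d := by
  have hbC : b ∉ C := fun h => hb (.inl h)
  cases d
  · have hr' : v ∉ C → (G.alphaCond C).ConnPrefix C₁ i v false :=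
      fun hvC => hr (hG.alphaCond_arrow.2 ⟨⟨hbv, hb⟩, hvC, hbC⟩)
    exact ⟨fun hv => hr' fun h => hv (.inl h), fun _ h => absurd h (by simp),
      fun _ _ hvD => (hr' fun h => hvD (.inl h)).openPrefix fun h => hvD (.inr h)⟩
  · have hv : v ∉ G.antClosure C := fun hv => hb (mem_antClosure_of_arrow hbv hv)
    exact ⟨fun _ => hr (hG.alphaCond_arrow.2 ⟨⟨hbv, hv⟩, hbC, fun h => hv (.inl h)⟩),
      fun h => absurd h hv, fun h => absurd h hv⟩

lemma IsCG.backwardImage (hG : G.IsCG) {v : V} {d : Bool} (h : G.ConnPrefix (C ∪ C₁) i v d) :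
    G.BackwardImage C C₁ i v d := by
  induction h with
  | @start a v d hia hav =>
    have hiS := hG.mem_antClosure_iff_of_lineConn (C := C) hia.lineConn
    have haC : a ∉ C := fun h => hia.notMem_right (.inl h)
    by_cases hi : i ∈ G.antClosure C
    · exact hG.backwardImage_of_openPrefix (hiS.1 hi) haC
        (.inl (hG.lineConnAvoid_alphaCond hia)) hav
    · exact hG.backwardImage_of_notMem (mt hiS.2 hi) hav (.start (hG.lineConnAvoid_alphaCond hia))
  | @nonCollider a b v d d' hr hn hab hbv ih =>
    have haS := hG.mem_antClosure_iff_of_lineConn (C := C) hab.lineConn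
    have hbC : b ∉ C := fun h => hab.notMem_right (.inl h)
    by_cases ha : a ∈ G.antClosure C
    · exact hG.backwardImage_of_openPrefix (haS.1 ha) hbC
        ((ih.openPrefix hG ha hab.1).extend (hG.lineConnAvoid_alphaCond hab)) hbv
    · exact hG.backwardImage_of_notMem (mt haS.2 ha) hbv
        (.nonCollider (ih.1 ha) hn (hG.lineConnAvoid_alphaCond hab))
  | @collider a b v hr hab hvb ih =>
    obtain ⟨c, hc, hac, hcb⟩ := hab
    by_cases ha : a ∈ G.antClosure C
    · obtain ⟨u, -, huC, hq, hua⟩ := ih.2.1 ha rfl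
      have hv := mem_antClosure_of_arrow hvb
        ((hG.mem_antClosure_iff_of_lineConn (hac.trans hcb)).1 ha)
      refine ⟨fun h => absurd hv h, fun _ h => absurd h (by simp), fun _ _ hvD => ?_⟩
      by_cases huv : u = v
      · exact huv ▸ hq
      · exact hq.tail (hG.alphaCond_line_of_collider hua ha (hac.trans hcb) hvb huv huC
          fun h => hvD (.inl h)) fun h => hvD (.inr h)
    · obtain ⟨hac', hcS⟩ := hG.lineConn_alphaCond ha hac
      obtain ⟨hcb', hbS⟩ := hG.lineConn_alphaCond hcS hcb
      have hcC₁ : c ∈ C₁ := hc.resolve_left fun h => hcS (.inl h)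
      exact hG.backwardImage_of_notMem (d := false) hbS hvb
        (.collider (ih.1 ha) ⟨c, hcC₁, hac', hcb'⟩)

lemma IsCG.prefixConnect_alphaCond (hG : G.IsCG) {j : V}
    (h : G.PrefixConnect (C ∪ C₁) i j) : (G.alphaCond C).PrefixConnect C₁ i j := by
  rcases h with hij | ⟨v, d, hr, hvj⟩
  · exact .inl (hG.lineConnAvoid_alphaCond hij)
  · have himg := hG.backwardImage hr
    by_cases hv : v ∈ G.antClosure C
    · exact (himg.openPrefix hG hv hvj.1).prefixConnect (hG.lineConnAvoid_alphaCond hvj)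
    · exact .inr ⟨v, d, himg.1 hv, hG.lineConnAvoid_alphaCond hvj⟩

end Backward

theorem IsCG.cConnect_alphaCond_iff {G : MixedGraph V} (hG : G.IsCG) {C C₁ : Set V} {i : V}
    (hi : i ∉ C ∪ C₁) (j : V) :
    (G.alphaCond C).cConnect i j C₁ ↔ G.cConnect i j (C ∪ C₁) := by
  rw [cConnect_iff_prefixConnect hG.alphaCond.2, cConnect_iff_prefixConnect hG.2]
  exact ⟨hG.prefixConnect_of_alphaCond hi, hG.prefixConnect_alphaCond⟩

theorem IsCG.cSep_alphaCond_iff {G : MixedGraph V} (hG : G.IsCG) {A B C C₁ : Set V}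
    (hAC : Disjoint A C) (hAC₁ : Disjoint A C₁) :
    (G.alphaCond C).cSep A B C₁ ↔ G.cSep A B (C ∪ C₁) :=
  forall₂_congr fun _ hi => forall₂_congr fun j _ => not_congr <|
    hG.cConnect_alphaCond_iff
      ((Set.disjoint_union_right.2 ⟨hAC, hAC₁⟩).notMem_of_mem_left hi) j

end MixedGraph

theorem stmt10_general (G : MixedGraph V) (hG : G.IsCG) (C : Set V) :
    (G.alphaCond C).IsCG ∧
    ∀ A B C₁ : Set V, A ⊆ G.nodes → B ⊆ G.nodes → C₁ ⊆ G.nodes →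
      Disjoint A B → Disjoint A C → Disjoint A C₁ →
      Disjoint B C → Disjoint B C₁ → Disjoint C C₁ →
      ((G.alphaCond C).cSep A B C₁ ↔ G.cSep A B (C ∪ C₁)) :=
  ⟨hG.alphaCond, fun _ _ _ _ _ _ _ hAC hAC₁ _ _ _ => hG.cSep_alphaCond_iff hAC hAC₁⟩

/-- The conditioning algorithm generates chain graphs from chain graphs; consequently
the class of chain graphs with the LWF Markov property is stable under conditioning. -/
theorem stmt10 (G : MixedGraph V) (hG : G.IsCG) (C : Set V) (hC : C ⊆ G.nodes) :
    (G.alphaCond C).IsCG ∧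
    ∀ A B C₁ : Set V, A ⊆ G.nodes → B ⊆ G.nodes → C₁ ⊆ G.nodes →
      Disjoint A B → Disjoint A C → Disjoint A C₁ →
      Disjoint B C → Disjoint B C₁ → Disjoint C C₁ →
      ((G.alphaCond C).cSep A B C₁ ↔ G.cSep A B (C ∪ C₁)) :=
  stmt10_general G hG C

end LWF
end
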